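/- arXiv:1710.06382 — 6 statements merged into one kernel-verified Lean document; each statement's English description precedes it below -/
import Mathlib

section
/- In the quadratic-loss SGD model started exactly at the truth, θ_0 = θ*, the expected first increment of the Pflug statistic is E[S_2 − S_1] = −γ · E[ε²] · E[(x_2ᵀx_1)²], which is strictly negative whenever σ² = E[ε²] > 0 and E[(x_2ᵀx_1)²] > 0. -/
open MeasureTheory Matrix

/-- Quadratic-loss SGD started exactly at the truth `θ₀ = θ*`,
with data `y = xᵀθ* + ε`, `x ~ μx`, `ε ~ με` independent of `x`, `E[ε] = 0`,
`E[ε²] = σ²`.  The stochastic gradients are `∇ℓ_n = -(y_n - x_nᵀθ_{n-1}) x_n`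
and `θ₁ = θ₀ - γ ∇ℓ₁`.  Then the expected first increment of the Pflug
statistic is `E[S₂ - S₁] = E[∇ℓ₂ᵀ ∇ℓ₁] = -γ σ² E[(x₂ᵀx₁)²]`, which is strictly
negative whenever `σ² > 0` and `E[(x₂ᵀx₁)²] > 0`. -/
theorem pflug_first_increment_quadratic
    (p : ℕ) (μx : Measure (Fin p → ℝ)) (με : Measure ℝ)
    [IsProbabilityMeasure μx] [IsProbabilityMeasure με]
    (θstar : Fin p → ℝ) (γ σ2 : ℝ) (hγ : 0 < γ)
    (hmean : ∫ e, e ∂με = 0) (hvar : ∫ e, e ^ 2 ∂με = σ2)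
    (hεint : Integrable (fun e : ℝ => e ^ 2) με)
    (hxint : Integrable (fun x : Fin p → ℝ => (∑ i, x i ^ 2) ^ 2) μx)
    -- gradient of the quadratic loss at parameter θ and data (x, e):
    -- ∇ℓ = -(y - xᵀθ) x with y = xᵀθ* + e
    (g : (Fin p → ℝ) → (Fin p → ℝ) → ℝ → Fin p → ℝ)
    (hg : ∀ θ x e, g θ x e = -(((x ⬝ᵥ θstar + e) - x ⬝ᵥ θ) • x))
    -- expected first increment of the Pflug statistic:
    -- θ₀ = θ*, θ₁ = θ₀ - γ ∇ℓ₁, E[S₂ - S₁] = E[∇ℓ₂ᵀ ∇ℓ₁]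
    (ΔS : ℝ)
    (hΔS : ΔS = ∫ x₁, ∫ e₁, ∫ x₂, ∫ e₂,
      g (θstar - γ • g θstar x₁ e₁) x₂ e₂ ⬝ᵥ g θstar x₁ e₁ ∂με ∂μx ∂με ∂μx) :
    ΔS = -γ * σ2 * ∫ x₁, ∫ x₂, (x₂ ⬝ᵥ x₁) ^ 2 ∂μx ∂μx ∧
    (0 < σ2 → 0 < ∫ x₁, ∫ x₂, (x₂ ⬝ᵥ x₁) ^ 2 ∂μx ∂μx → ΔS < 0) := by
  -- abbreviation
  set I : ℝ := ∫ x₁, ∫ x₂, (x₂ ⬝ᵥ x₁) ^ 2 ∂μx ∂μx with hI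
  -- e ↦ e is integrable w.r.t. με
  have hid : Integrable (fun e : ℝ => e) με := by
    refine (hεint.add (integrable_const 1)).mono' aestronglyMeasurable_id ?_
    filter_upwards with e
    simp only [Real.norm_eq_abs, Pi.add_apply]
    rcases le_total (|e|) 1 with h | h
    · nlinarith [sq_nonneg e]
    · nlinarith [sq_abs e]
  -- pointwise simplification of the integrand
  have key : ∀ (x₁ : Fin p → ℝ) (e₁ : ℝ) (x₂ : Fin p → ℝ) (e₂ : ℝ),
      g (θstar - γ • g θstar x₁ e₁) x₂ e₂ ⬝ᵥ g θstar x₁ e₁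
        = e₂ * (e₁ * (x₂ ⬝ᵥ x₁)) - γ * (e₁ * (x₂ ⬝ᵥ x₁)) * (e₁ * (x₂ ⬝ᵥ x₁)) := by
    intro x₁ e₁ x₂ e₂
    simp only [hg]
    simp only [dotProduct_sub, dotProduct_add, dotProduct_smul, smul_dotProduct, dotProduct_neg,
      neg_dotProduct, smul_eq_mul, smul_neg, smul_smul, neg_smul, sub_neg_eq_add,
      neg_neg]
    ring
  -- innermost integral in e₂
  have hinner : ∀ (x₁ : Fin p → ℝ) (e₁ : ℝ) (x₂ : Fin p → ℝ),
      (∫ e₂, g (θstar - γ • g θstar x₁ e₁) x₂ e₂ ⬝ᵥ g θstar x₁ e₁ ∂με)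
        = (-γ * e₁ ^ 2) * (x₂ ⬝ᵥ x₁) ^ 2 := by
    intro x₁ e₁ x₂
    have h1 : (fun e₂ => g (θstar - γ • g θstar x₁ e₁) x₂ e₂ ⬝ᵥ g θstar x₁ e₁)
        = fun e₂ => e₂ * (e₁ * (x₂ ⬝ᵥ x₁)) - γ * (e₁ * (x₂ ⬝ᵥ x₁)) * (e₁ * (x₂ ⬝ᵥ x₁)) := by
      funext e₂; exact key x₁ e₁ x₂ e₂
    rw [h1, integral_sub (hid.mul_const _) (integrable_const _),
      integral_mul_const, hmean, integral_const]
    simp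
    ring
  have main : ΔS = -γ * σ2 * I := by
    rw [hΔS]
    have h2 : ∀ (x₁ : Fin p → ℝ) (e₁ : ℝ),
        (∫ x₂, ∫ e₂, g (θstar - γ • g θstar x₁ e₁) x₂ e₂ ⬝ᵥ g θstar x₁ e₁ ∂με ∂μx)
          = e₁ ^ 2 * ((-γ) * ∫ x₂, (x₂ ⬝ᵥ x₁) ^ 2 ∂μx) := by
      intro x₁ e₁
      simp only [hinner]
      rw [integral_const_mul]
      ring
    have h3 : ∀ (x₁ : Fin p → ℝ),
        (∫ e₁, ∫ x₂, ∫ e₂, g (θstar - γ • g θstar x₁ e₁) x₂ e₂ ⬝ᵥ g θstar x₁ e₁ ∂με ∂μx ∂με)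
          = σ2 * ((-γ) * ∫ x₂, (x₂ ⬝ᵥ x₁) ^ 2 ∂μx) := by
      intro x₁
      simp only [h2]
      rw [integral_mul_const, hvar]
    simp only [h3]
    rw [hI, ← integral_const_mul]
    congr 1
    funext x₁
    ring
  refine ⟨main, fun hσ hIpos => ?_⟩
  rw [main]
  have : 0 < γ * σ2 * I := by positivity
  nlinarith
end

section
/- In the quadratic-loss SGD model, the expected one-step change of the Pflug statistic conditional on the current iterate satisfies, for every θ ∈ ℝ^p, Δ(θ) := E[∇ℓ_{n+1}ᵀ∇ℓ_n | θ_{n−1} = θ] = (θ − θ*)ᵀ(V² − γ M)(θ − θ*) − γ σ² E[(x_2ᵀx_1)²], where V = E[x xᵀ] and M = E[x xᵀ V x xᵀ]; moreover M is positive semidefinite. -/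
open MeasureTheory Matrix

/-!
Write `d = θ - θ*` and `r = x₁ᵀd - e₁` for the first residual. The first gradient is `r x₁` and
the second, taken at `θ - γ r x₁`, is `(x₂ᵀd - γ r x₂ᵀx₁ - e₂) x₂`, so their inner product is a
polynomial in the two noises of degree at most two. Integrating out `e₂` (mean zero), then `x₂`
(second moments, giving `V`), then `e₁` (mean zero, variance `σ²`) and finally `x₁` (fourth
moments, giving `V²` and `M`) yields the formula. `M` is positive semidefinite because it is the
second-moment matrix of `x` under the nonnegative weight `xᵀVx`.
-/

lemma integrable_of_integrable_sq {α : Type*} {m : MeasurableSpace α} {μ : Measure α}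
    [IsFiniteMeasure μ] {f : α → ℝ} (hf : AEStronglyMeasurable f μ)
    (hf2 : Integrable (fun a => f a ^ 2) μ) : Integrable f μ :=
  ((memLp_two_iff_integrable_sq hf).2 hf2).integrable one_le_two

section FiniteSums

variable {α ι : Type*} [Fintype ι] {m : MeasurableSpace α} {μ : Measure α}
  {F : ι → ι → α → ℝ}

lemma integrable_sum_sum_const_mul (hF : ∀ i j, Integrable (F i j) μ) (c : ι → ι → ℝ) :
    Integrable (fun a => ∑ i, ∑ j, c i j * F i j a) μ :=
  integrable_finsetSum _ fun i _ => integrable_finsetSum _ fun j _ => (hF i j).const_mul _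

lemma integral_sum_sum_const_mul (hF : ∀ i j, Integrable (F i j) μ) (c : ι → ι → ℝ) :
    ∫ a, ∑ i, ∑ j, c i j * F i j a ∂μ = ∑ i, ∑ j, c i j * ∫ a, F i j a ∂μ := by
  rw [integral_finsetSum _ fun i _ =>
    integrable_finsetSum _ fun j _ => (hF i j).const_mul _]
  refine Finset.sum_congr rfl fun i _ => ?_
  rw [integral_finsetSum _ fun j _ => (hF i j).const_mul _]
  simp only [integral_const_mul]

end FiniteSums

section Bilinear

variable {ι : Type*} [Fintype ι]

lemma dotProduct_mulVec_eq_sum_sum (A : Matrix ι ι ℝ) (v w : ι → ℝ) :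
    v ⬝ᵥ (A *ᵥ w) = ∑ i, ∑ j, A i j * (v i * w j) := by
  simp only [dotProduct, mulVec, Finset.mul_sum]
  exact Finset.sum_congr rfl fun i _ => Finset.sum_congr rfl fun j _ => by ring

lemma dotProduct_mul_dotProduct_mul_eq_sum_sum (a b x : ι → ℝ) (c : ℝ) :
    (x ⬝ᵥ a) * (x ⬝ᵥ b) * c = ∑ i, ∑ j, a i * b j * (x i * x j * c) := by
  rw [dotProduct, dotProduct, Finset.sum_mul_sum, Finset.sum_mul]
  exact Finset.sum_congr rfl fun i _ => by
    rw [Finset.sum_mul]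
    exact Finset.sum_congr rfl fun j _ => by ring

end Bilinear

section Moments

variable {ι : Type*} [Fintype ι] {μ : Measure (ι → ℝ)}

lemma integrable_mul_of_integrable_fourth [IsFiniteMeasure μ]
    (h4 : ∀ i j k l, Integrable (fun x : ι → ℝ => x i * x j * x k * x l) μ) (i j : ι) :
    Integrable (fun x : ι → ℝ => x i * x j) μ :=
  integrable_of_integrable_sq (by fun_prop) <| (h4 i j i j).congr <| .of_forall fun x => by ring

lemma integrable_mul_mul_dotProduct_mulVec
    (h4 : ∀ i j k l, Integrable (fun x : ι → ℝ => x i * x j * x k * x l) μ)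
    (A : Matrix ι ι ℝ) (i j : ι) :
    Integrable (fun x : ι → ℝ => x i * x j * (x ⬝ᵥ (A *ᵥ x))) μ := by
  refine (integrable_sum_sum_const_mul (h4 i j) A).congr (.of_forall fun x => ?_)
  simp only [dotProduct_mulVec_eq_sum_sum, Finset.mul_sum]
  exact Finset.sum_congr rfl fun k _ => Finset.sum_congr rfl fun l _ => by ring

lemma integrable_dotProduct_mulVec_self
    (hx : ∀ i j, Integrable (fun x : ι → ℝ => x i * x j) μ) (A : Matrix ι ι ℝ) :
    Integrable (fun x : ι → ℝ => x ⬝ᵥ (A *ᵥ x)) μ := by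
  simpa only [← dotProduct_mulVec_eq_sum_sum] using integrable_sum_sum_const_mul hx A

variable {w : (ι → ℝ) → ℝ} {W : Matrix ι ι ℝ}

lemma integrable_dotProduct_mul_dotProduct_mul
    (hw : ∀ i j, Integrable (fun x : ι → ℝ => x i * x j * w x) μ) (a b : ι → ℝ) :
    Integrable (fun x => (x ⬝ᵥ a) * (x ⬝ᵥ b) * w x) μ := by
  simpa only [← dotProduct_mul_dotProduct_mul_eq_sum_sum] using
    integrable_sum_sum_const_mul hw fun i j => a i * b j

lemma integral_dotProduct_mul_dotProduct_mul
    (hw : ∀ i j, Integrable (fun x : ι → ℝ => x i * x j * w x) μ)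
    (hW : ∀ i j, W i j = ∫ x, x i * x j * w x ∂μ) (a b : ι → ℝ) :
    ∫ x, (x ⬝ᵥ a) * (x ⬝ᵥ b) * w x ∂μ = a ⬝ᵥ (W *ᵥ b) := by
  simp only [dotProduct_mul_dotProduct_mul_eq_sum_sum, integral_sum_sum_const_mul hw,
    dotProduct_mulVec_eq_sum_sum, hW]
  exact Finset.sum_congr rfl fun i _ => Finset.sum_congr rfl fun j _ => by ring

lemma posSemidef_of_weighted_moments
    (hw : ∀ i j, Integrable (fun x : ι → ℝ => x i * x j * w x) μ)
    (hW : ∀ i j, W i j = ∫ x, x i * x j * w x ∂μ) (hw0 : ∀ x, 0 ≤ w x) : W.PosSemidef := by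
  refine .of_dotProduct_mulVec_nonneg ?_ fun v => ?_
  · ext i j
    simp only [conjTranspose_apply, star_trivial, hW]
    exact integral_congr_ae (.of_forall fun x => by ring)
  · rw [star_trivial, ← integral_dotProduct_mul_dotProduct_mul hw hW]
    exact integral_nonneg fun x => mul_nonneg (mul_self_nonneg _) (hw0 x)

variable {V : Matrix ι ι ℝ}

lemma integrable_dotProduct_mul_dotProduct
    (hx : ∀ i j, Integrable (fun x : ι → ℝ => x i * x j) μ) (a b : ι → ℝ) :
    Integrable (fun x => (x ⬝ᵥ a) * (x ⬝ᵥ b)) μ := by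
  simpa only [mul_one] using integrable_dotProduct_mul_dotProduct_mul (w := fun _ => 1)
    (by simpa only [mul_one] using hx) a b

lemma integral_dotProduct_mul_dotProduct
    (hx : ∀ i j, Integrable (fun x : ι → ℝ => x i * x j) μ)
    (hV : ∀ i j, V i j = ∫ x, x i * x j ∂μ) (a b : ι → ℝ) :
    ∫ x, (x ⬝ᵥ a) * (x ⬝ᵥ b) ∂μ = a ⬝ᵥ (V *ᵥ b) := by
  simpa only [mul_one] using integral_dotProduct_mul_dotProduct_mul (w := fun _ => 1)
    (by simpa only [mul_one] using hx) (by simpa only [mul_one] using hV) a b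

lemma posSemidef_of_moments
    (hx : ∀ i j, Integrable (fun x : ι → ℝ => x i * x j) μ)
    (hV : ∀ i j, V i j = ∫ x, x i * x j ∂μ) : V.PosSemidef :=
  posSemidef_of_weighted_moments (w := fun _ => 1) (by simpa only [mul_one] using hx)
    (by simpa only [mul_one] using hV) fun _ => zero_le_one

end Moments

section Noise

variable {με : Measure ℝ} [IsProbabilityMeasure με]

lemma integral_add_mul_of_integral_eq_zero (hε : Integrable (fun e : ℝ => e) με)
    (hmean : ∫ e, e ∂με = 0) (a b : ℝ) : ∫ e, a + b * e ∂με = a := by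
  rw [integral_add (integrable_const a) (hε.const_mul b), integral_const_mul, hmean]
  simp

lemma integral_add_mul_add_mul_sq {σ2 : ℝ} (hmean : ∫ e, e ∂με = 0)
    (hvar : ∫ e, e ^ 2 ∂με = σ2) (hε2 : Integrable (fun e : ℝ => e ^ 2) με) (a b c : ℝ) :
    ∫ e, a + b * e + c * e ^ 2 ∂με = a + c * σ2 := by
  have hε : Integrable (fun e : ℝ => e) με := integrable_of_integrable_sq (by fun_prop) hε2
  rw [integral_add (f := fun e => a + b * e) ((integrable_const a).add (hε.const_mul b))
      (hε2.const_mul c),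
    integral_add_mul_of_integral_eq_zero hε hmean, integral_const_mul, hvar]

end Noise

section LeastSquaresSGD

variable {ι : Type*} [Fintype ι]

def lsqGrad (θstar θ x : ι → ℝ) (e : ℝ) : ι → ℝ := (x ⬝ᵥ (θ - θstar) - e) • x

lemma neg_residual_smul_eq_lsqGrad (θstar θ x : ι → ℝ) (e : ℝ) :
    -(((x ⬝ᵥ θstar + e) - x ⬝ᵥ θ) • x) = lsqGrad θstar θ x e := by
  rw [lsqGrad, ← neg_smul, dotProduct_sub]
  ring_nf

lemma lsqGrad_sgdStep_dotProduct_lsqGrad (θstar θ x₁ x₂ : ι → ℝ) (γ e₁ e₂ : ℝ) :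
    lsqGrad θstar (θ - γ • lsqGrad θstar θ x₁ e₁) x₂ e₂ ⬝ᵥ lsqGrad θstar θ x₁ e₁
      = ((x₁ ⬝ᵥ (θ - θstar) - e₁) * ((x₂ ⬝ᵥ x₁) * (x₂ ⬝ᵥ (θ - θstar)))
          - γ * (x₁ ⬝ᵥ (θ - θstar) - e₁) ^ 2 * ((x₂ ⬝ᵥ x₁) * (x₂ ⬝ᵥ x₁)))
        + -((x₁ ⬝ᵥ (θ - θstar) - e₁) * (x₂ ⬝ᵥ x₁)) * e₂ := by
  simp only [lsqGrad, sub_right_comm θ _ θstar, dotProduct_sub, smul_dotProduct,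
    dotProduct_smul, smul_eq_mul]
  ring

end LeastSquaresSGD

section PflugIncrement

variable {ι : Type*} [Fintype ι] {μx : Measure (ι → ℝ)} {με : Measure ℝ}
  [IsProbabilityMeasure με] {V M : Matrix ι ι ℝ} {σ2 : ℝ}

lemma integral_pflug_increment_given_first_sample
    (hx : ∀ i j, Integrable (fun x : ι → ℝ => x i * x j) μx)
    (hV : ∀ i j, V i j = ∫ x, x i * x j ∂μx)
    (hmean : ∫ e, e ∂με = 0) (hvar : ∫ e, e ^ 2 ∂με = σ2)
    (hε2 : Integrable (fun e : ℝ => e ^ 2) με) (θstar θ x₁ : ι → ℝ) (γ : ℝ) :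
    ∫ e₁, ∫ x₂, ∫ e₂,
        lsqGrad θstar (θ - γ • lsqGrad θstar θ x₁ e₁) x₂ e₂ ⬝ᵥ lsqGrad θstar θ x₁ e₁
          ∂με ∂μx ∂με
      = (x₁ ⬝ᵥ (θ - θstar)) * (x₁ ⬝ᵥ (V *ᵥ (θ - θstar)))
        - γ * ((x₁ ⬝ᵥ (θ - θstar)) * (x₁ ⬝ᵥ (θ - θstar)) * (x₁ ⬝ᵥ (V *ᵥ x₁)))
        - γ * σ2 * (x₁ ⬝ᵥ (V *ᵥ x₁)) := by
  simp_rw [lsqGrad_sgdStep_dotProduct_lsqGrad]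
  generalize θ - θstar = d
  have hε : Integrable (fun e : ℝ => e) με := integrable_of_integrable_sq (by fun_prop) hε2
  have hsecond : ∀ r : ℝ, ∫ x₂, r * ((x₂ ⬝ᵥ x₁) * (x₂ ⬝ᵥ d))
      - γ * r ^ 2 * ((x₂ ⬝ᵥ x₁) * (x₂ ⬝ᵥ x₁)) ∂μx
      = r * (x₁ ⬝ᵥ (V *ᵥ d)) - γ * r ^ 2 * (x₁ ⬝ᵥ (V *ᵥ x₁)) := fun r => by
    rw [integral_sub ((integrable_dotProduct_mul_dotProduct hx _ _).const_mul _)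
      ((integrable_dotProduct_mul_dotProduct hx _ _).const_mul _), integral_const_mul,
      integral_const_mul, integral_dotProduct_mul_dotProduct hx hV,
      integral_dotProduct_mul_dotProduct hx hV]
  have hexpand : ∀ e₁ : ℝ, (x₁ ⬝ᵥ d - e₁) * (x₁ ⬝ᵥ (V *ᵥ d))
      - γ * (x₁ ⬝ᵥ d - e₁) ^ 2 * (x₁ ⬝ᵥ (V *ᵥ x₁))
      = ((x₁ ⬝ᵥ d) * (x₁ ⬝ᵥ (V *ᵥ d)) - γ * (x₁ ⬝ᵥ d) ^ 2 * (x₁ ⬝ᵥ (V *ᵥ x₁)))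
        + (2 * γ * (x₁ ⬝ᵥ d) * (x₁ ⬝ᵥ (V *ᵥ x₁)) - x₁ ⬝ᵥ (V *ᵥ d)) * e₁
        + -(γ * (x₁ ⬝ᵥ (V *ᵥ x₁))) * e₁ ^ 2 := fun e₁ => by ring
  simp_rw [integral_add_mul_of_integral_eq_zero hε hmean,
    hsecond, hexpand, integral_add_mul_add_mul_sq hmean hvar hε2]
  ring

lemma integral_pflug_increment_over_first_sample
    (hx : ∀ i j, Integrable (fun x : ι → ℝ => x i * x j) μx)
    (hV : ∀ i j, V i j = ∫ x, x i * x j ∂μx)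
    (hw : ∀ i j, Integrable (fun x : ι → ℝ => x i * x j * (x ⬝ᵥ (V *ᵥ x))) μx)
    (hM : ∀ i j, M i j = ∫ x, x i * x j * (x ⬝ᵥ (V *ᵥ x)) ∂μx) (d : ι → ℝ) (γ c : ℝ) :
    ∫ x, (x ⬝ᵥ d) * (x ⬝ᵥ (V *ᵥ d)) - γ * ((x ⬝ᵥ d) * (x ⬝ᵥ d) * (x ⬝ᵥ (V *ᵥ x)))
        - c * (x ⬝ᵥ (V *ᵥ x)) ∂μx
      = d ⬝ᵥ ((V * V - γ • M) *ᵥ d) - c * ∫ x, x ⬝ᵥ (V *ᵥ x) ∂μx := by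
  have hVd := integrable_dotProduct_mul_dotProduct hx d (V *ᵥ d)
  have hMd := (integrable_dotProduct_mul_dotProduct_mul hw d d).const_mul γ
  rw [integral_sub (hVd.sub' hMd) ((integrable_dotProduct_mulVec_self hx V).const_mul c),
    integral_sub hVd hMd, integral_const_mul, integral_const_mul,
    integral_dotProduct_mul_dotProduct hx hV, integral_dotProduct_mul_dotProduct_mul hw hM,
    sub_mulVec, dotProduct_sub, smul_mulVec, dotProduct_smul, ← mulVec_mulVec, smul_eq_mul]

end PflugIncrement

theorem pflug_expected_increment_quadratic_general
    (p : ℕ) (μx : Measure (Fin p → ℝ)) (με : Measure ℝ)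
    [IsProbabilityMeasure μx] [IsProbabilityMeasure με]
    (θstar : Fin p → ℝ) (γ σ2 : ℝ)
    (hmean : ∫ e, e ∂με = 0) (hvar : ∫ e, e ^ 2 ∂με = σ2)
    (hεint : Integrable (fun e : ℝ => e ^ 2) με)
    (hfourth : ∀ i j k l : Fin p,
      Integrable (fun x : Fin p → ℝ => x i * x j * x k * x l) μx)
    (V M : Matrix (Fin p) (Fin p) ℝ)
    (hV : ∀ i j, V i j = ∫ x, x i * x j ∂μx)
    (hM : ∀ i j, M i j = ∫ x, x i * x j * (x ⬝ᵥ (V *ᵥ x)) ∂μx)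
    -- gradient of the quadratic loss: ∇ℓ = -(y - xᵀθ) x with y = xᵀθ* + e
    (g : (Fin p → ℝ) → (Fin p → ℝ) → ℝ → Fin p → ℝ)
    (hg : ∀ θ x e, g θ x e = -(((x ⬝ᵥ θstar + e) - x ⬝ᵥ θ) • x))
    -- Δ(θ) = E[∇ℓ_{n+1}ᵀ∇ℓ_n | θ_{n-1} = θ], with θ_n = θ - γ ∇ℓ_n
    (Δ : (Fin p → ℝ) → ℝ)
    (hΔ : ∀ θ, Δ θ = ∫ x₁, ∫ e₁, ∫ x₂, ∫ e₂,
      g (θ - γ • g θ x₁ e₁) x₂ e₂ ⬝ᵥ g θ x₁ e₁ ∂με ∂μx ∂με ∂μx) :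
    (∀ θ : Fin p → ℝ,
      Δ θ = (θ - θstar) ⬝ᵥ ((V * V - γ • M) *ᵥ (θ - θstar))
            - γ * σ2 * ∫ x₁, ∫ x₂, (x₂ ⬝ᵥ x₁) ^ 2 ∂μx ∂μx) ∧
    M.PosSemidef := by
  obtain rfl : g = lsqGrad θstar :=
    funext₃ fun θ x e => (hg θ x e).trans (neg_residual_smul_eq_lsqGrad θstar θ x e)
  have hx := integrable_mul_of_integrable_fourth hfourth
  have hw := integrable_mul_mul_dotProduct_mulVec hfourth V
  have hVx : ∀ x, 0 ≤ x ⬝ᵥ (V *ᵥ x) := by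
    simpa only [star_trivial] using (posSemidef_of_moments hx hV).dotProduct_mulVec_nonneg
  refine ⟨fun θ => ?_, posSemidef_of_weighted_moments hw hM hVx⟩
  have hsq (x₁ : Fin p → ℝ) : ∫ x₂, (x₂ ⬝ᵥ x₁) ^ 2 ∂μx = x₁ ⬝ᵥ (V *ᵥ x₁) := by
    simpa only [sq] using integral_dotProduct_mul_dotProduct hx hV x₁ x₁
  simp_rw [hΔ, integral_pflug_increment_given_first_sample hx hV hmean hvar hεint, hsq]
  exact integral_pflug_increment_over_first_sample hx hV hw hM _ γ _

/-- Quadratic-loss SGD with data `y = xᵀθ* + ε`, `x ~ μx`,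
`ε ~ με` independent of `x`, `E[ε] = 0`, `E[ε²] = σ²`, finite fourth moments.
Conditional on the current iterate `θ_{n-1} = θ`, with two fresh samples, the
expected one-step change of the Pflug statistic is
`Δ(θ) = E[∇ℓ_{n+1}ᵀ∇ℓ_n | θ_{n-1} = θ]
      = (θ-θ*)ᵀ(V² - γM)(θ-θ*) - γ σ² E[(x₂ᵀx₁)²]`,
where `V = E[x xᵀ]`, `M = E[x xᵀ V x xᵀ]`; moreover `M` is positive
semidefinite. -/
theorem pflug_expected_increment_quadratic
    (p : ℕ) (μx : Measure (Fin p → ℝ)) (με : Measure ℝ)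
    [IsProbabilityMeasure μx] [IsProbabilityMeasure με]
    (θstar : Fin p → ℝ) (γ σ2 : ℝ) (hγ : 0 < γ)
    (hmean : ∫ e, e ∂με = 0) (hvar : ∫ e, e ^ 2 ∂με = σ2)
    (hεint : Integrable (fun e : ℝ => e ^ 2) με)
    (hfourth : ∀ i j k l : Fin p,
      Integrable (fun x : Fin p → ℝ => x i * x j * x k * x l) μx)
    (V M : Matrix (Fin p) (Fin p) ℝ)
    (hV : ∀ i j, V i j = ∫ x, x i * x j ∂μx)
    (hM : ∀ i j, M i j = ∫ x, x i * x j * (x ⬝ᵥ (V *ᵥ x)) ∂μx)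
    -- gradient of the quadratic loss: ∇ℓ = -(y - xᵀθ) x with y = xᵀθ* + e
    (g : (Fin p → ℝ) → (Fin p → ℝ) → ℝ → Fin p → ℝ)
    (hg : ∀ θ x e, g θ x e = -(((x ⬝ᵥ θstar + e) - x ⬝ᵥ θ) • x))
    -- Δ(θ) = E[∇ℓ_{n+1}ᵀ∇ℓ_n | θ_{n-1} = θ], with θ_n = θ - γ ∇ℓ_n
    (Δ : (Fin p → ℝ) → ℝ)
    (hΔ : ∀ θ, Δ θ = ∫ x₁, ∫ e₁, ∫ x₂, ∫ e₂,
      g (θ - γ • g θ x₁ e₁) x₂ e₂ ⬝ᵥ g θ x₁ e₁ ∂με ∂μx ∂με ∂μx) :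
    (∀ θ : Fin p → ℝ,
      Δ θ = (θ - θstar) ⬝ᵥ ((V * V - γ • M) *ᵥ (θ - θstar))
            - γ * σ2 * ∫ x₁, ∫ x₂, (x₂ ⬝ᵥ x₁) ^ 2 ∂μx ∂μx) ∧
    M.PosSemidef :=
  pflug_expected_increment_quadratic_general p μx με θstar γ σ2 hmean hvar hεint hfourth V M hV hM g
    hg Δ hΔ
end

section
/- In the quadratic-loss implicit SGD model started exactly at the truth, θ_0 = θ*, the expected first increment of the Pflug statistic built from implicit gradients is E[g_2ᵀg_1] = −γσ² · E[ (x_2ᵀx_1)² / ((1 + γ‖x_1‖²)² (1 + γ‖x_2‖²)) ], which is strictly negative for EVERY learning rate γ > 0 whenever σ² > 0 and P(x_2ᵀx_1 ≠ 0) > 0. -/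
open MeasureTheory Matrix

/-!
Started at the truth, the implicit gradients are `g₁ = -e₁ x₁ / (1 + γ‖x₁‖²)` and
`g₂ = -(e₂ - γ e₁ (x₂ᵀx₁) / (1 + γ‖x₁‖²)) x₂ / (1 + γ‖x₂‖²)`. Hence `g₂ᵀg₁` is a term linear in
the fresh noise `e₂`, which integrates to zero, plus `-γ e₁²` times the weight
`(x₂ᵀx₁)² / ((1 + γ‖x₁‖²)² (1 + γ‖x₂‖²))`; integrating `e₁²` gives `σ²`. The weight is
nonnegative, bounded by `γ⁻²`, and vanishes
exactly where `x₂ᵀx₁ = 0`, so its integral is positive.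
-/

section DotProduct

variable {n : Type*} [Fintype n]

lemma dotProduct_self_nonneg (x : n → ℝ) : 0 ≤ x ⬝ᵥ x :=
  Finset.sum_nonneg fun i _ => mul_self_nonneg (x i)

lemma sq_dotProduct_le (x y : n → ℝ) : (x ⬝ᵥ y) ^ 2 ≤ (x ⬝ᵥ x) * (y ⬝ᵥ y) := by
  simpa only [dotProduct, sq] using Finset.sum_mul_sq_le_sq_mul_sq Finset.univ x y

lemma one_add_mul_dotProduct_self_pos {γ : ℝ} (hγ : 0 ≤ γ) (x : n → ℝ) :
    0 < 1 + γ * (x ⬝ᵥ x) := by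
  have := mul_nonneg hγ (dotProduct_self_nonneg x)
  linarith

end DotProduct

lemma integrable_id_of_integrable_sq {μ : Measure ℝ} [IsFiniteMeasure μ]
    (h : Integrable (fun e : ℝ => e ^ 2) μ) : Integrable (fun e : ℝ => e) μ :=
  ((memLp_two_iff_integrable_sq aestronglyMeasurable_id).2 h).integrable one_le_two

lemma integral_noise_bilinear_add_sq {α : Type*} [MeasurableSpace α] (μ : Measure α)
    (με : Measure ℝ) [IsProbabilityMeasure με] {σ2 : ℝ} (hε : Integrable (fun e : ℝ => e) με)
    (hmean : ∫ e, e ∂με = 0) (hvar : ∫ e, e ^ 2 ∂με = σ2) (a b : α → α → ℝ) :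
    ∫ x₁, ∫ e₁, ∫ x₂, ∫ e₂, (a x₁ x₂ * e₁ * e₂ + b x₁ x₂ * e₁ ^ 2) ∂με ∂μ ∂με ∂μ
      = σ2 * ∫ x₁, ∫ x₂, b x₁ x₂ ∂μ ∂μ := by
  have h_e₂ : ∀ x₁ e₁ x₂, ∫ e₂, (a x₁ x₂ * e₁ * e₂ + b x₁ x₂ * e₁ ^ 2) ∂με = b x₁ x₂ * e₁ ^ 2 := by
    intro x₁ e₁ x₂
    rw [integral_add (hε.const_mul _) (integrable_const _), integral_const_mul, hmean]
    simp
  simp_rw [h_e₂, integral_mul_const, integral_const_mul, hvar, integral_mul_const]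
  ring

section ImplicitSGD

variable {n : Type*} [Fintype n]

/-- Closed form of the implicit SGD step for the quadratic loss, with data `y = xᵀθstar + e`. -/
noncomputable def implicitStep (γ : ℝ) (θstar θ x : n → ℝ) (e : ℝ) : n → ℝ :=
  θ + (γ / (1 + γ * (x ⬝ᵥ x))) • (((x ⬝ᵥ θstar + e) - x ⬝ᵥ θ) • x)

noncomputable def implicitWeight (γ : ℝ) (x₁ x₂ : n → ℝ) : ℝ :=
  (x₂ ⬝ᵥ x₁) ^ 2 / ((1 + γ * (x₁ ⬝ᵥ x₁)) ^ 2 * (1 + γ * (x₂ ⬝ᵥ x₂)))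

variable {γ : ℝ}

lemma implicitGradient_two_steps_dotProduct (hγ : 0 < γ) (θstar x₁ x₂ : n → ℝ)
    (e₁ e₂ : ℝ) :
    (γ⁻¹ • (implicitStep γ θstar θstar x₁ e₁
        - implicitStep γ θstar (implicitStep γ θstar θstar x₁ e₁) x₂ e₂))
      ⬝ᵥ (γ⁻¹ • (θstar - implicitStep γ θstar θstar x₁ e₁))
      = (x₂ ⬝ᵥ x₁) / ((1 + γ * (x₁ ⬝ᵥ x₁)) * (1 + γ * (x₂ ⬝ᵥ x₂))) * e₁ * e₂
        + -γ * implicitWeight γ x₁ x₂ * e₁ ^ 2 := by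
  have hd₁ := (one_add_mul_dotProduct_self_pos hγ.le x₁).ne'
  have hd₂ := (one_add_mul_dotProduct_self_pos hγ.le x₂).ne'
  simp only [implicitStep, implicitWeight, smul_dotProduct, dotProduct_smul, add_dotProduct,
    dotProduct_add, sub_dotProduct, dotProduct_sub, smul_eq_mul, dotProduct_comm θstar x₁]
  field_simp
  ring

lemma implicitWeight_nonneg (hγ : 0 ≤ γ) (x₁ x₂ : n → ℝ) : 0 ≤ implicitWeight γ x₁ x₂ :=
  div_nonneg (sq_nonneg _) (mul_nonneg (sq_nonneg _) (one_add_mul_dotProduct_self_pos hγ x₂).le)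

lemma implicitWeight_le (hγ : 0 < γ) (x₁ x₂ : n → ℝ) : implicitWeight γ x₁ x₂ ≤ (γ ^ 2)⁻¹ := by
  set s₁ := x₁ ⬝ᵥ x₁
  set s₂ := x₂ ⬝ᵥ x₂
  have hs₁ : 0 ≤ s₁ := dotProduct_self_nonneg x₁
  have hs₂ : 0 ≤ s₂ := dotProduct_self_nonneg x₂
  have hd₁ : 1 ≤ 1 + γ * s₁ := by nlinarith
  have hd₂ : 1 ≤ 1 + γ * s₂ := by nlinarith
  have hγs : (γ * s₁) * (γ * s₂) ≤ (1 + γ * s₁) ^ 2 * (1 + γ * s₂) := by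
    calc (γ * s₁) * (γ * s₂) ≤ (1 + γ * s₁) * (1 + γ * s₂) := by gcongr <;> linarith
      _ ≤ (1 + γ * s₁) ^ 2 * (1 + γ * s₂) := by gcongr; nlinarith
  rw [implicitWeight, div_le_iff₀ (by positivity), inv_mul_eq_div, le_div_iff₀ (by positivity)]
  calc (x₂ ⬝ᵥ x₁) ^ 2 * γ ^ 2 ≤ s₂ * s₁ * γ ^ 2 := by gcongr; exact sq_dotProduct_le x₂ x₁
    _ = (γ * s₁) * (γ * s₂) := by ring
    _ ≤ _ := hγs

lemma support_uncurry_implicitWeight (hγ : 0 ≤ γ) :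
    Function.support (Function.uncurry (implicitWeight (n := n) γ))
      = {q : (n → ℝ) × (n → ℝ) | q.2 ⬝ᵥ q.1 ≠ 0} := by
  ext q
  have hd₁ := one_add_mul_dotProduct_self_pos hγ q.1
  have hd₂ := one_add_mul_dotProduct_self_pos hγ q.2
  simp [Function.uncurry, implicitWeight, hd₁.ne', hd₂.ne']

lemma continuous_uncurry_implicitWeight (hγ : 0 ≤ γ) :
    Continuous (Function.uncurry (implicitWeight (n := n) γ)) := by
  have hd : ∀ x : n → ℝ, 1 + γ * (x ⬝ᵥ x) ≠ 0 := fun x => (one_add_mul_dotProduct_self_pos hγ x).ne'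
  exact .div (by fun_prop) (by fun_prop) fun q => mul_ne_zero (pow_ne_zero 2 (hd q.1)) (hd q.2)

lemma integrable_uncurry_implicitWeight (hγ : 0 < γ) {ν : Measure ((n → ℝ) × (n → ℝ))}
    [IsFiniteMeasure ν] : Integrable (Function.uncurry (implicitWeight γ)) ν := by
  refine .of_bound (continuous_uncurry_implicitWeight hγ.le).aestronglyMeasurable (γ ^ 2)⁻¹
    (.of_forall fun ⟨x₁, x₂⟩ => ?_)
  rw [Function.uncurry_apply_pair, Real.norm_of_nonneg (implicitWeight_nonneg hγ.le _ _)]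
  exact implicitWeight_le hγ _ _

lemma integral_integral_implicitWeight_pos (hγ : 0 < γ) {μ : Measure (n → ℝ)}
    [IsFiniteMeasure μ] (hμ : 0 < (μ.prod μ) {q : (n → ℝ) × (n → ℝ) | q.2 ⬝ᵥ q.1 ≠ 0}) :
    0 < ∫ x₁, ∫ x₂, implicitWeight γ x₁ x₂ ∂μ ∂μ := by
  have hint := integrable_uncurry_implicitWeight (ν := μ.prod μ) hγ
  rw [integral_integral hint]
  refine (integral_pos_iff_support_of_nonneg (f := Function.uncurry (implicitWeight γ))
    (fun q => implicitWeight_nonneg hγ.le q.1 q.2) hint).2 ?_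
  rwa [support_uncurry_implicitWeight hγ.le]

end ImplicitSGD

theorem pflug_first_increment_quadratic_implicit_general
    (p : ℕ) (μx : Measure (Fin p → ℝ)) (με : Measure ℝ)
    [IsProbabilityMeasure μx] [IsProbabilityMeasure με]
    (θstar : Fin p → ℝ) (γ σ2 : ℝ) (hγ : 0 < γ)
    (hmean : ∫ e, e ∂με = 0) (hvar : ∫ e, e ^ 2 ∂με = σ2)
    (hεint : Integrable (fun e : ℝ => e ^ 2) με)
    -- closed-form implicit SGD step at parameter θ with data (x, e)
    (step : (Fin p → ℝ) → (Fin p → ℝ) → ℝ → Fin p → ℝ)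
    (hstep : ∀ θ x e, step θ x e
      = θ + (γ / (1 + γ * (x ⬝ᵥ x))) • (((x ⬝ᵥ θstar + e) - x ⬝ᵥ θ) • x))
    -- E[g₂ᵀ g₁] with θ₀ = θ*, θ₁ = step θ₀, θ₂ = step θ₁, gₙ = (θ_{n-1} - θ_n)/γ
    (ΔS : ℝ)
    (hΔS : ΔS = ∫ x₁, ∫ e₁, ∫ x₂, ∫ e₂,
      (γ⁻¹ • (step θstar x₁ e₁ - step (step θstar x₁ e₁) x₂ e₂))
        ⬝ᵥ (γ⁻¹ • (θstar - step θstar x₁ e₁)) ∂με ∂μx ∂με ∂μx) :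
    ΔS = -(γ * σ2) * ∫ x₁, ∫ x₂,
          (x₂ ⬝ᵥ x₁) ^ 2
            / ((1 + γ * (x₁ ⬝ᵥ x₁)) ^ 2 * (1 + γ * (x₂ ⬝ᵥ x₂))) ∂μx ∂μx ∧
    (0 < σ2 →
      0 < (μx.prod μx) {q : (Fin p → ℝ) × (Fin p → ℝ) | q.2 ⬝ᵥ q.1 ≠ 0} →
      ΔS < 0) := by
  obtain rfl : step = implicitStep γ θstar := funext fun θ => funext fun x => funext (hstep θ x)
  have hΔS' : ΔS = -(γ * σ2) * ∫ x₁, ∫ x₂, implicitWeight γ x₁ x₂ ∂μx ∂μx := by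
    simp_rw [hΔS, implicitGradient_two_steps_dotProduct hγ,
      integral_noise_bilinear_add_sq μx με (integrable_id_of_integrable_sq hεint) hmean hvar,
      integral_const_mul]
    ring
  refine ⟨hΔS', fun hσ hμ => ?_⟩
  rw [hΔS']
  exact mul_neg_of_neg_of_pos (neg_neg_of_pos (mul_pos hγ hσ))
    (integral_integral_implicitWeight_pos hγ hμ)

/-- Quadratic-loss implicit SGD started exactly at the truth
`θ₀ = θ*`, with data `y = xᵀθ* + ε`, `x ~ μx`, `ε ~ με` independent of `x`,
`E[ε] = 0`, `E[ε²] = σ²`.  The implicit update has closed form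
`θ_n = θ_{n-1} + (γ/(1+γ‖x_n‖²))(y_n - x_nᵀθ_{n-1}) x_n` and the implicit
gradient is `g_n = (θ_{n-1} - θ_n)/γ`.  Then
`E[g₂ᵀg₁] = -γ σ² E[(x₂ᵀx₁)² / ((1+γ‖x₁‖²)²(1+γ‖x₂‖²))]`,
which is strictly negative for every learning rate `γ > 0` whenever `σ² > 0`
and `P(x₂ᵀx₁ ≠ 0) > 0`. -/
theorem pflug_first_increment_quadratic_implicit
    (p : ℕ) (μx : Measure (Fin p → ℝ)) (με : Measure ℝ)
    [IsProbabilityMeasure μx] [IsProbabilityMeasure με]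
    (θstar : Fin p → ℝ) (γ σ2 : ℝ) (hγ : 0 < γ)
    (hmean : ∫ e, e ∂με = 0) (hvar : ∫ e, e ^ 2 ∂με = σ2)
    (hεint : Integrable (fun e : ℝ => e ^ 2) με)
    (hxint : Integrable (fun x : Fin p → ℝ => (∑ i, x i ^ 2) ^ 2) μx)
    -- closed-form implicit SGD step at parameter θ with data (x, e)
    (step : (Fin p → ℝ) → (Fin p → ℝ) → ℝ → Fin p → ℝ)
    (hstep : ∀ θ x e, step θ x e
      = θ + (γ / (1 + γ * (x ⬝ᵥ x))) • (((x ⬝ᵥ θstar + e) - x ⬝ᵥ θ) • x))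
    -- E[g₂ᵀ g₁] with θ₀ = θ*, θ₁ = step θ₀, θ₂ = step θ₁, gₙ = (θ_{n-1} - θ_n)/γ
    (ΔS : ℝ)
    (hΔS : ΔS = ∫ x₁, ∫ e₁, ∫ x₂, ∫ e₂,
      (γ⁻¹ • (step θstar x₁ e₁ - step (step θstar x₁ e₁) x₂ e₂))
        ⬝ᵥ (γ⁻¹ • (θstar - step θstar x₁ e₁)) ∂με ∂μx ∂με ∂μx) :
    ΔS = -(γ * σ2) * ∫ x₁, ∫ x₂,
          (x₂ ⬝ᵥ x₁) ^ 2
            / ((1 + γ * (x₁ ⬝ᵥ x₁)) ^ 2 * (1 + γ * (x₂ ⬝ᵥ x₂))) ∂μx ∂μx ∧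
    (0 < σ2 →
      0 < (μx.prod μx) {q : (Fin p → ℝ) × (Fin p → ℝ) | q.2 ⬝ᵥ q.1 ≠ 0} →
      ΔS < 0) :=
  pflug_first_increment_quadratic_implicit_general p μx με θstar γ σ2 hγ hmean hvar hεint step hstep
    ΔS hΔS
end

section
/- In the one-dimensional model with x ≡ 1 (i.e., y_n = θ* + ε_n and SGD update θ_n = θ_{n−1} + γ(y_n − θ_{n−1})), the conditional expected increment of the Pflug statistic is Δ(θ) = E[∇ℓ_{n+1}∇ℓ_n | θ_{n−1} = θ] = (1 − γ)(θ − θ*)² − γσ². In particular, if γ ≥ 1 then Δ(θ) < 0 for every θ ∈ ℝ, so the diagnostic decreases in expectation everywhere even though SGD itself diverges for γ > 2. -/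
open MeasureTheory

section Moments

variable {Ω : Type*} [MeasurableSpace Ω] {μ : Measure Ω} [IsProbabilityMeasure μ]
  {X : Ω → ℝ}

theorem integral_const_add_mul (hX : Integrable X μ) (a b : ℝ) :
    ∫ ω, a + b * X ω ∂μ = a + b * ∫ ω, X ω ∂μ := by
  rw [integral_add (integrable_const a) (hX.const_mul b), integral_const_mul, integral_const,
    probReal_univ, one_smul]

theorem integral_const_add_mul_add_mul_sq (hX : Integrable X μ)
    (hX2 : Integrable (fun ω => X ω ^ 2) μ) (a b c : ℝ) :
    ∫ ω, a + b * X ω + c * X ω ^ 2 ∂μ = a + b * ∫ ω, X ω ∂μ + c * ∫ ω, X ω ^ 2 ∂μ := by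
  have hAffine : Integrable (fun ω => a + b * X ω) μ :=
    (integrable_const a).add (hX.const_mul b)
  rw [integral_add hAffine (hX2.const_mul c), integral_const_add_mul hX, integral_const_mul]

end Moments

theorem pflug_diagnostic_one_dim_explicit_general
    (ν : Measure ℝ) [IsProbabilityMeasure ν]
    (θstar σ2 γ : ℝ) (hσ2 : 0 < σ2)
    (hmean : ∫ e, e ∂ν = 0) (hvar : ∫ e, e ^ 2 ∂ν = σ2)
    (hint1 : Integrable (fun e : ℝ => e) ν)
    (hint2 : Integrable (fun e : ℝ => e ^ 2) ν)
    -- Δ(θ): expectation of ∇ℓ_{n+1}·∇ℓ_n given θ_{n-1} = θ, where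
    -- y₁ = θ* + e₁, θ_n = θ + γ(y₁ - θ), y₂ = θ* + e₂,
    -- ∇ℓ_n = -(y₁ - θ), ∇ℓ_{n+1} = -(y₂ - θ_n).
    (Δ : ℝ → ℝ)
    (hΔ : ∀ θ : ℝ, Δ θ =
      ∫ e₁, ∫ e₂,
        (-((θstar + e₂) - (θ + γ * ((θstar + e₁) - θ)))) *
        (-((θstar + e₁) - θ)) ∂ν ∂ν) :
    (∀ θ : ℝ, Δ θ = (1 - γ) * (θ - θstar) ^ 2 - γ * σ2) ∧
    (1 ≤ γ → ∀ θ : ℝ, Δ θ < 0) := by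
  have hΔ_eq (θ : ℝ) : Δ θ = (1 - γ) * (θ - θstar) ^ 2 - γ * σ2 := by
    -- The fresh noise `e₂` enters linearly, so integrating it out leaves a quadratic in `e₁`.
    have inner (e₁ : ℝ) : ∫ e₂, (-((θstar + e₂) - (θ + γ * ((θstar + e₁) - θ)))) *
        (-((θstar + e₁) - θ)) ∂ν =
        (1 - γ) * (θ - θstar) ^ 2 + (2 * γ - 1) * (θ - θstar) * e₁ + -γ * e₁ ^ 2 := by
      calc _ = ∫ e₂, ((1 - γ) * (θ - θstar) ^ 2 + (2 * γ - 1) * (θ - θstar) * e₁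
                + -γ * e₁ ^ 2) + (e₁ - (θ - θstar)) * e₂ ∂ν := by
            congr 1; ext e₂; ring
        _ = _ := by rw [integral_const_add_mul hint1, hmean, mul_zero, add_zero]
    rw [hΔ θ]
    simp only [inner]
    rw [integral_const_add_mul_add_mul_sq hint1 hint2, hmean, hvar]
    ring
  refine ⟨hΔ_eq, fun hγ θ => ?_⟩
  rw [hΔ_eq θ]
  nlinarith [sq_nonneg (θ - θstar)]

/-- One-dimensional model `y = θ* + ε` with SGD update
`θ_n = θ_{n-1} + γ (y_n - θ_{n-1})` under quadratic loss; stochastic gradient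
`∇ℓ_n = -(y_n - θ_{n-1})`.  Conditional on `θ_{n-1} = θ`, drawing two fresh
i.i.d. noises `e₁, e₂ ~ ν`, the expected increment of the Pflug statistic is
`Δ(θ) = E[∇ℓ_{n+1} ∇ℓ_n | θ_{n-1} = θ] = (1 - γ)(θ - θ*)² - γ σ²`; and if
`γ ≥ 1` then `Δ(θ) < 0` for every `θ`. -/
theorem pflug_diagnostic_one_dim_explicit
    (ν : Measure ℝ) [IsProbabilityMeasure ν]
    (θstar σ2 γ : ℝ) (hγ : 0 < γ) (hσ2 : 0 < σ2)
    (hmean : ∫ e, e ∂ν = 0) (hvar : ∫ e, e ^ 2 ∂ν = σ2)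
    (hint1 : Integrable (fun e : ℝ => e) ν)
    (hint2 : Integrable (fun e : ℝ => e ^ 2) ν)
    -- Δ(θ): expectation of ∇ℓ_{n+1}·∇ℓ_n given θ_{n-1} = θ, where
    -- y₁ = θ* + e₁, θ_n = θ + γ(y₁ - θ), y₂ = θ* + e₂,
    -- ∇ℓ_n = -(y₁ - θ), ∇ℓ_{n+1} = -(y₂ - θ_n).
    (Δ : ℝ → ℝ)
    (hΔ : ∀ θ : ℝ, Δ θ =
      ∫ e₁, ∫ e₂,
        (-((θstar + e₂) - (θ + γ * ((θstar + e₁) - θ)))) *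
        (-((θstar + e₁) - θ)) ∂ν ∂ν) :
    (∀ θ : ℝ, Δ θ = (1 - γ) * (θ - θstar) ^ 2 - γ * σ2) ∧
    (1 ≤ γ → ∀ θ : ℝ, Δ θ < 0) :=
  pflug_diagnostic_one_dim_explicit_general ν θstar σ2 γ hσ2 hmean hvar hint1 hint2 Δ hΔ
end

section
/- In the quadratic-loss SGD model with ‖x‖² ≤ M almost surely and V = E[xxᵀ] ⪰ μI for some μ > 0, if 0 < γ < 2/M and γμ(2 − γM) ≤ 1, then for every n ≥ 0, E[‖θ_n − θ*‖²] ≤ (1 − γ(2 − γM)μ)ⁿ E[‖θ_0 − θ*‖²] + γσ²E[‖x‖²] / ((2 − γM)μ); i.e., constant-rate SGD forgets its initial conditions exponentially fast and stabilizes at a mean squared error of order γ. -/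
/-!
Write `δₙ = θₙ - θ*`, so that `δₙ₊₁ = δₙ + γ (εₙ₊₁ - xₙ₊₁ᵀδₙ) xₙ₊₁`. Since `δₙ` is a function of
`θ₀` and the first `n` data points, it is independent of `(xₙ₊₁, εₙ₊₁)`, and `E‖δₙ₊₁‖²` can be
computed with `δₙ = d` frozen. The term linear in `ε` vanishes because `ε` is centred and
independent of `x`, and `‖x‖² ≤ M` together with `E[(xᵀd)²] = dᵀVd ≥ μ‖d‖²` gives
`E‖δₙ₊₁‖² ≤ (1 - γ(2 - γM)μ) E‖δₙ‖² + γ²σ² E‖x‖²`; unrolling this affine recursion gives the bound.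
-/

open MeasureTheory ProbabilityTheory Matrix

section DotProduct
variable {ι : Type*} [Fintype ι]

lemma dotProduct_self_nonneg_s14 (v : ι → ℝ) : 0 ≤ v ⬝ᵥ v := by
  simpa using dotProduct_self_star_nonneg v

lemma norm_le_sqrt_of_dotProduct_self_le {a : ι → ℝ} {M : ℝ} (h : a ⬝ᵥ a ≤ M) : ‖a‖ ≤ √M := by
  refine (pi_norm_le_iff_of_nonneg (Real.sqrt_nonneg M)).mpr fun i => ?_
  rw [Real.norm_eq_abs]
  refine Real.abs_le_sqrt (le_trans ?_ h)
  rw [sq]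
  exact Finset.single_le_sum (f := fun k => a k * a k) (fun k _ => mul_self_nonneg _)
    (Finset.mem_univ i)

lemma Continuous.integrable_of_ae_dotProduct_self_le {E : Type*} [NormedAddCommGroup E]
    {ν : Measure (ι → ℝ)} [IsFiniteMeasure ν] {f : (ι → ℝ) → E} (hf : Continuous f) {M : ℝ}
    (hbdd : ∀ᵐ a ∂ν, a ⬝ᵥ a ≤ M) : Integrable f ν := by
  have hball : ∀ᵐ a ∂ν, a ∈ Metric.closedBall (0 : ι → ℝ) √M :=
    hbdd.mono fun a ha => mem_closedBall_zero_iff.mpr (norm_le_sqrt_of_dotProduct_self_le ha)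
  have := hf.continuousOn.integrableOn_compact (μ := ν) (isCompact_closedBall 0 √M)
  rwa [IntegrableOn, Measure.restrict_eq_self_of_ae_mem hball] at this

lemma integral_sq_dotProduct_eq_dotProduct_mulVec {ν : Measure (ι → ℝ)} {V : Matrix ι ι ℝ}
    (hV : ∀ i j, V i j = ∫ a, a i * a j ∂ν) (hint : ∀ i j, Integrable (fun a => a i * a j) ν)
    (d : ι → ℝ) : ∫ a, (a ⬝ᵥ d) ^ 2 ∂ν = d ⬝ᵥ (V *ᵥ d) := by
  have hexpand : ∀ a : ι → ℝ, (a ⬝ᵥ d) ^ 2 = ∑ i, ∑ j, d i * d j * (a i * a j) := by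
    intro a
    simp only [dotProduct, sq, Finset.sum_mul_sum]
    exact Finset.sum_congr rfl fun i _ => Finset.sum_congr rfl fun j _ => by ring
  simp_rw [hexpand, dotProduct, mulVec, dotProduct, Finset.mul_sum]
  rw [integral_finsetSum _ fun i _ => integrable_finsetSum _ fun j _ => (hint i j).const_mul _]
  refine Finset.sum_congr rfl fun i _ => ?_
  rw [integral_finsetSum _ fun j _ => (hint i j).const_mul _]
  refine Finset.sum_congr rfl fun j _ => ?_
  rw [integral_const_mul, hV]
  ring

end DotProduct

lemma integral_prod_add_mul_add_mul_sq {α : Type*} [MeasurableSpace α] {ν : Measure α}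
    [SFinite ν] {ρ : Measure ℝ} [IsProbabilityMeasure ρ] {A B C : α → ℝ} (hA : Integrable A ν)
    (hB : Integrable B ν) (hC : Integrable C ν) (hsq : Integrable (fun e : ℝ => e ^ 2) ρ)
    (hmean : ∫ e, e ∂ρ = 0) :
    Integrable (fun z : α × ℝ => A z.1 + B z.1 * z.2 + C z.1 * z.2 ^ 2) (ν.prod ρ) ∧
      ∫ z, (A z.1 + B z.1 * z.2 + C z.1 * z.2 ^ 2) ∂(ν.prod ρ)
        = ∫ a, A a ∂ν + (∫ a, C a ∂ν) * ∫ e, e ^ 2 ∂ρ := by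
  have hid : Integrable (fun e : ℝ => e) ρ :=
    ((memLp_two_iff_integrable_sq aestronglyMeasurable_id).mpr hsq).integrable one_le_two
  have hA' := hA.comp_fst ρ
  have hB' := hB.mul_prod hid
  have hC' := hC.mul_prod hsq
  refine ⟨(hA'.add hB').add hC', ?_⟩
  rw [integral_add (f := fun z => A z.1 + B z.1 * z.2) (hA'.add hB') hC', integral_add hA' hB',
    integral_fun_fst, integral_prod_mul B (fun e => e), integral_prod_mul C (fun e => e ^ 2),
    hmean]
  simp

section Independence
variable {Ω : Type*} {mΩ : MeasurableSpace Ω} {P : Measure Ω} [IsProbabilityMeasure P]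

theorem indep_sup_of_indep_sup {m₁ m₂ m₃ : MeasurableSpace Ω} (h₁ : m₁ ≤ mΩ) (h₂ : m₂ ≤ mΩ)
    (h₃ : m₃ ≤ mΩ) (h₁₂₃ : Indep m₁ (m₂ ⊔ m₃) P) (h₂₃ : Indep m₂ m₃ P) :
    Indep (m₁ ⊔ m₂) m₃ P := by
  let p : Set (Set Ω) := Set.image2 (· ∩ ·) {s | MeasurableSet[m₁] s} {s | MeasurableSet[m₂] s}
  have hp : IsPiSystem p := by
    rintro _ ⟨a, ha, b, hb, rfl⟩ _ ⟨a', ha', b', hb', rfl⟩ -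
    exact ⟨a ∩ a', ha.inter ha', b ∩ b', hb.inter hb', by ac_rfl⟩
  have hgen : m₁ ⊔ m₂ = MeasurableSpace.generateFrom p := by
    refine le_antisymm (sup_le ?_ ?_) (MeasurableSpace.generateFrom_le ?_)
    · exact fun s hs => MeasurableSpace.measurableSet_generateFrom
        ⟨s, hs, Set.univ, MeasurableSet.univ, Set.inter_univ s⟩
    · exact fun s hs => MeasurableSpace.measurableSet_generateFrom
        ⟨Set.univ, MeasurableSet.univ, s, hs, Set.univ_inter s⟩
    · rintro _ ⟨a, ha, b, hb, rfl⟩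
      exact (le_sup_left (b := m₂) a ha).inter (le_sup_right (a := m₁) b hb)
  refine IndepSets.indep (sup_le h₁ h₂) h₃ hp (@MeasurableSpace.isPiSystem_measurableSet Ω m₃)
    hgen (@MeasurableSpace.generateFrom_measurableSet Ω m₃).symm ?_
  rw [IndepSets_iff]
  rintro _ c ⟨a, ha, b, hb, rfl⟩ hc
  rw [Indep_iff] at h₁₂₃ h₂₃
  have hbc : MeasurableSet[m₂ ⊔ m₃] (b ∩ c) :=
    (le_sup_left (b := m₃) b hb).inter (le_sup_right (a := m₂) c hc)
  have hab : P (a ∩ b) = P a * P b := h₁₂₃ a b ha (le_sup_left (b := m₃) b hb)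
  rw [Set.inter_assoc, h₁₂₃ a _ ha hbc, h₂₃ b c hb hc, hab, mul_assoc]

theorem indepFun_of_recursion {α β : Type*} [MeasurableSpace α] [MeasurableSpace β]
    {δ : ℕ → Ω → α} {z : ℕ → Ω → β} {F : α × β → α} (hF : Measurable F)
    (hδ₀ : Measurable (δ 0)) (hz : ∀ n, Measurable (z n))
    (hδ₀z : IndepFun (δ 0) (fun ω n => z n ω) P) (hiid : iIndepFun z P)
    (hrec : ∀ n ω, δ (n + 1) ω = F (δ n ω, z (n + 1) ω)) (n : ℕ) :
    IndepFun (δ n) (z (n + 1)) P := by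
  let past : ℕ → MeasurableSpace Ω := fun n =>
    MeasurableSpace.comap (δ 0) inferInstance ⊔
      ⨆ k ∈ Set.Iic n, MeasurableSpace.comap (z k) inferInstance
  have hz_past : ∀ {k n}, k ≤ n → Measurable[past n] (z k) := fun hkn =>
    (comap_measurable _).mono (le_sup_of_le_right
      (le_biSup (fun k => MeasurableSpace.comap (z k) inferInstance) (Set.mem_Iic.mpr hkn))) le_rfl
  have hδ_past : ∀ n, Measurable[past n] (δ n) := by
    intro n
    induction n with
    | zero => exact (comap_measurable _).mono le_sup_left le_rfl
    | succ n ih =>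
      have hmono : past n ≤ past (n + 1) :=
        sup_le_sup_left (biSup_mono fun k hk => le_trans hk n.le_succ) _
      rw [show δ (n + 1) = fun ω => F (δ n ω, z (n + 1) ω) from funext (hrec n)]
      exact hF.comp ((ih.mono hmono le_rfl).prodMk (hz_past le_rfl))
  have hz_le_stream : ∀ k, MeasurableSpace.comap (z k) inferInstance
      ≤ MeasurableSpace.comap (fun ω n => z n ω) inferInstance := fun k =>
    Measurable.comap_le ((measurable_pi_apply k).comp (comap_measurable fun ω n => z n ω))
  have hnow : Indep (⨆ k ∈ Set.Iic n, MeasurableSpace.comap (z k) inferInstance)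
      (MeasurableSpace.comap (z (n + 1)) inferInstance) P := by
    simpa using indep_iSup_of_disjoint (fun k => (hz k).comap_le) hiid.iIndep
      (S := Set.Iic n) (T := {n + 1}) (by simp)
  have hpast : Indep (past n) (MeasurableSpace.comap (z (n + 1)) inferInstance) P := by
    refine indep_sup_of_indep_sup hδ₀.comap_le (iSup₂_le fun k _ => (hz k).comap_le)
      (hz (n + 1)).comap_le ?_ hnow
    refine indep_of_indep_of_le_right ((IndepFun_iff_Indep _ _ _).mp hδ₀z) ?_
    exact sup_le (iSup₂_le fun k _ => hz_le_stream k) (hz_le_stream _)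
  exact (IndepFun_iff_Indep _ _ _).mpr (indep_of_indep_of_le_left hpast (hδ_past n).comap_le)

theorem integral_comp_le_of_indepFun {α β : Type*} [MeasurableSpace α] [MeasurableSpace β]
    {X : Ω → α} {Y : Ω → β} (hX : Measurable X) (hY : Measurable Y) (hXY : IndepFun X Y P)
    {f : α × β → ℝ} (hf : Measurable f) (hf₀ : ∀ q, 0 ≤ f q) {g : α → ℝ} (hg : Measurable g)
    (hgX : Integrable (fun ω => g (X ω)) P)
    (hfg : ∀ a, Integrable (fun b => f (a, b)) (P.map Y) ∧ ∫ b, f (a, b) ∂(P.map Y) ≤ g a) :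
    Integrable (fun ω => f (X ω, Y ω)) P ∧ ∫ ω, f (X ω, Y ω) ∂P ≤ ∫ ω, g (X ω) ∂P := by
  have hlaw : P.map (fun ω => (X ω, Y ω)) = (P.map X).prod (P.map Y) :=
    (indepFun_iff_map_prod_eq_prod_map_map hX.aemeasurable hY.aemeasurable).mp hXY
  have hg_int : Integrable g (P.map X) :=
    (integrable_map_measure hg.aestronglyMeasurable hX.aemeasurable).mpr hgX
  have hf_int : Integrable f ((P.map X).prod (P.map Y)) := by
    refine (integrable_prod_iff hf.aestronglyMeasurable).mpr
      ⟨ae_of_all _ fun a => (hfg a).1, hg_int.mono' ?_ (ae_of_all _ fun a => ?_)⟩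
    · exact hf.norm.stronglyMeasurable.integral_prod_right'.aestronglyMeasurable
    · simp_rw [Real.norm_eq_abs, abs_of_nonneg (hf₀ _)]
      rw [abs_of_nonneg (integral_nonneg fun b => hf₀ _)]
      exact (hfg a).2
  refine ⟨(integrable_map_measure hf.aestronglyMeasurable (hX.prodMk hY).aemeasurable).mp
    (hlaw ▸ hf_int), ?_⟩
  rw [← integral_map (hX.prodMk hY).aemeasurable hf.aestronglyMeasurable,
    ← integral_map hX.aemeasurable hg.aestronglyMeasurable, hlaw, integral_prod f hf_int]
  exact integral_mono hf_int.integral_prod_left hg_int fun a => (hfg a).2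

end Independence

lemma le_pow_mul_add_div_of_le_mul_add {ρ c : ℝ} {a : ℕ → ℝ} (hρ₀ : 0 ≤ ρ) (hρ₁ : ρ < 1)
    (hc : 0 ≤ c) (ha : ∀ n, a (n + 1) ≤ ρ * a n + c) (n : ℕ) :
    a n ≤ ρ ^ n * a 0 + c / (1 - ρ) := by
  have h1ρ : 0 < 1 - ρ := by linarith
  induction n with
  | zero => simpa using div_nonneg hc h1ρ.le
  | succ n ih =>
    calc a (n + 1) ≤ ρ * a n + c := ha n
      _ ≤ ρ * (ρ ^ n * a 0 + c / (1 - ρ)) + c := by gcongr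
      _ = ρ ^ (n + 1) * a 0 + c / (1 - ρ) := by field_simp; ring

section SGDStep
variable {ι : Type*} [Fintype ι]

/-- As `y - xᵀθ = ε - xᵀ(θ - θ*)`, one SGD step on the data point `z = (x, ε)` maps the error
`d = θ - θ*` to `sgdErrorStep γ d z`. -/
def sgdErrorStep (γ : ℝ) (d : ι → ℝ) (z : (ι → ℝ) × ℝ) : ι → ℝ :=
  d + γ • ((z.2 - z.1 ⬝ᵥ d) • z.1)

lemma continuous_sgdErrorStep (γ : ℝ) :
    Continuous fun q : (ι → ℝ) × ((ι → ℝ) × ℝ) => sgdErrorStep γ q.1 q.2 := by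
  unfold sgdErrorStep
  fun_prop

lemma dotProduct_self_sgdErrorStep (γ : ℝ) (d : ι → ℝ) (z : (ι → ℝ) × ℝ) :
    sgdErrorStep γ d z ⬝ᵥ sgdErrorStep γ d z
      = d ⬝ᵥ d - γ * ((2 - γ * (z.1 ⬝ᵥ z.1)) * (z.1 ⬝ᵥ d) ^ 2)
        + 2 * γ * (1 - γ * (z.1 ⬝ᵥ z.1)) * (z.1 ⬝ᵥ d) * z.2
        + γ ^ 2 * (z.1 ⬝ᵥ z.1) * z.2 ^ 2 := by
  simp only [sgdErrorStep, dotProduct_add, add_dotProduct, smul_dotProduct, dotProduct_smul,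
    smul_eq_mul, dotProduct_comm d z.1]
  ring

variable {νx : Measure (ι → ℝ)} {νε : Measure ℝ} [IsProbabilityMeasure νx]
  [IsProbabilityMeasure νε] {γ M μ : ℝ} {V : Matrix ι ι ℝ}

theorem integral_dotProduct_self_sgdErrorStep_le (hγ : 0 ≤ γ) (hγM : γ * M ≤ 2)
    (hmean : ∫ e, e ∂νε = 0) (hεint : Integrable (fun e : ℝ => e ^ 2) νε)
    (hbdd : ∀ᵐ a ∂νx, a ⬝ᵥ a ≤ M) (hV : ∀ i j, V i j = ∫ a, a i * a j ∂νx)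
    (hVμ : ∀ v : ι → ℝ, μ * (v ⬝ᵥ v) ≤ v ⬝ᵥ (V *ᵥ v)) (d : ι → ℝ) :
    Integrable (fun z => sgdErrorStep γ d z ⬝ᵥ sgdErrorStep γ d z) (νx.prod νε) ∧
      ∫ z, sgdErrorStep γ d z ⬝ᵥ sgdErrorStep γ d z ∂(νx.prod νε)
        ≤ (1 - γ * (2 - γ * M) * μ) * (d ⬝ᵥ d) + γ ^ 2 * (∫ e, e ^ 2 ∂νε) * ∫ a, a ⬝ᵥ a ∂νx := by
  have hint : ∀ {f : (ι → ℝ) → ℝ}, Continuous f → Integrable f νx :=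
    fun hf => hf.integrable_of_ae_dotProduct_self_le hbdd
  obtain ⟨hstep_int, hstep_eq⟩ := integral_prod_add_mul_add_mul_sq
    (A := fun a => d ⬝ᵥ d - γ * ((2 - γ * (a ⬝ᵥ a)) * (a ⬝ᵥ d) ^ 2))
    (B := fun a => 2 * γ * (1 - γ * (a ⬝ᵥ a)) * (a ⬝ᵥ d)) (C := fun a => γ ^ 2 * (a ⬝ᵥ a))
    (hint (by fun_prop)) (hint (by fun_prop)) (hint (by fun_prop)) hεint hmean
  simp_rw [dotProduct_self_sgdErrorStep]
  refine ⟨hstep_int, ?_⟩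
  have hdrift : ∫ a, d ⬝ᵥ d - γ * ((2 - γ * (a ⬝ᵥ a)) * (a ⬝ᵥ d) ^ 2) ∂νx
      ≤ (1 - γ * (2 - γ * M) * μ) * (d ⬝ᵥ d) :=
    calc ∫ a, d ⬝ᵥ d - γ * ((2 - γ * (a ⬝ᵥ a)) * (a ⬝ᵥ d) ^ 2) ∂νx
        ≤ ∫ a, d ⬝ᵥ d - γ * (2 - γ * M) * (a ⬝ᵥ d) ^ 2 ∂νx := by
          refine integral_mono_ae (hint (by fun_prop)) (hint (by fun_prop)) ?_
          filter_upwards [hbdd] with a ha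
          have : γ * (2 - γ * M) ≤ γ * (2 - γ * (a ⬝ᵥ a)) := by gcongr
          nlinarith [sq_nonneg (a ⬝ᵥ d)]
      _ = d ⬝ᵥ d - γ * (2 - γ * M) * (d ⬝ᵥ (V *ᵥ d)) := by
          rw [integral_sub (integrable_const _) ((hint (by fun_prop)).const_mul _),
            integral_const, integral_const_mul,
            integral_sq_dotProduct_eq_dotProduct_mulVec hV fun i j => hint (by fun_prop)]
          simp
      _ ≤ (1 - γ * (2 - γ * M) * μ) * (d ⬝ᵥ d) := by
          have := mul_le_mul_of_nonneg_left (hVμ d) (mul_nonneg hγ (sub_nonneg.mpr hγM))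
          linarith
  rw [hstep_eq, integral_const_mul]
  linarith

theorem integral_dotProduct_self_sgdErrorStep_comp_le {Ω : Type*} [MeasurableSpace Ω]
    {P : Measure Ω} [IsProbabilityMeasure P] (hγ : 0 ≤ γ) (hγM : γ * M ≤ 2)
    (hmean : ∫ e, e ∂νε = 0) (hεint : Integrable (fun e : ℝ => e ^ 2) νε)
    (hbdd : ∀ᵐ a ∂νx, a ⬝ᵥ a ≤ M) (hV : ∀ i j, V i j = ∫ a, a i * a j ∂νx)
    (hVμ : ∀ v : ι → ℝ, μ * (v ⬝ᵥ v) ≤ v ⬝ᵥ (V *ᵥ v)) {X : Ω → ι → ℝ} {Z : Ω → (ι → ℝ) × ℝ}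
    (hX : Measurable X) (hZ : Measurable Z) (hXZ : IndepFun X Z P)
    (hZ_law : P.map Z = νx.prod νε) (hX_int : Integrable (fun ω => X ω ⬝ᵥ X ω) P) :
    Integrable (fun ω => sgdErrorStep γ (X ω) (Z ω) ⬝ᵥ sgdErrorStep γ (X ω) (Z ω)) P ∧
      ∫ ω, sgdErrorStep γ (X ω) (Z ω) ⬝ᵥ sgdErrorStep γ (X ω) (Z ω) ∂P
        ≤ (1 - γ * (2 - γ * M) * μ) * (∫ ω, X ω ⬝ᵥ X ω ∂P)
          + γ ^ 2 * (∫ e, e ^ 2 ∂νε) * ∫ a, a ⬝ᵥ a ∂νx := by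
  set ρ := 1 - γ * (2 - γ * M) * μ
  set c := γ ^ 2 * (∫ e, e ^ 2 ∂νε) * ∫ a, a ⬝ᵥ a ∂νx
  have h := integral_comp_le_of_indepFun hX hZ hXZ
    ((continuous_sgdErrorStep γ).dotProduct (continuous_sgdErrorStep γ)).measurable
    (fun q => dotProduct_self_nonneg_s14 _) (g := fun d => ρ * (d ⬝ᵥ d) + c)
    (by fun_prop : Continuous fun d : ι → ℝ => ρ * (d ⬝ᵥ d) + c).measurable
    ((hX_int.const_mul ρ).add (integrable_const c))
    fun d => hZ_law ▸ integral_dotProduct_self_sgdErrorStep_le hγ hγM hmean hεint hbdd hV hVμ d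
  rw [integral_add (hX_int.const_mul ρ) (integrable_const c), integral_const_mul] at h
  simpa using h

end SGDStep

/-- Quadratic-loss SGD `θ_n = θ_{n-1} + γ(y_n - x_nᵀθ_{n-1})x_n`
with i.i.d. data `y_n = x_nᵀθ* + ε_n`, `x ~ νx`, `ε ~ νε` independent of `x`,
`E[ε] = 0`, `E[ε²] = σ²`, `‖x‖² ≤ M` almost surely and `V = E[xxᵀ] ⪰ μI` with
`μ > 0`.  If `0 < γ < 2/M` and `γμ(2 - γM) ≤ 1`, then for every `n ≥ 0`,
`E[‖θ_n - θ*‖²] ≤ (1 - γ(2-γM)μ)ⁿ E[‖θ₀ - θ*‖²] + γσ²E[‖x‖²]/((2-γM)μ)`. -/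
theorem sgd_quadratic_constant_rate_mse_bound
    (p : ℕ)
    (νx : Measure (Fin p → ℝ)) (νε : Measure ℝ)
    [IsProbabilityMeasure νx] [IsProbabilityMeasure νε]
    (θstar : Fin p → ℝ) (γ σ2 M μ : ℝ)
    (hμ : 0 < μ) (hM : 0 < M) (hγ : 0 < γ) (hγM : γ < 2 / M)
    (hstep : γ * μ * (2 - γ * M) ≤ 1)
    (hmean : ∫ e, e ∂νε = 0) (hvar : ∫ e, e ^ 2 ∂νε = σ2)
    (hεint : Integrable (fun e : ℝ => e ^ 2) νε)
    (hbdd : ∀ᵐ a ∂νx, a ⬝ᵥ a ≤ M)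
    (V : Matrix (Fin p) (Fin p) ℝ)
    (hV : ∀ i j, V i j = ∫ a, a i * a j ∂νx)
    (hVμ : ∀ v : Fin p → ℝ, μ * (v ⬝ᵥ v) ≤ v ⬝ᵥ (V *ᵥ v))
    -- the probability space carrying the i.i.d. data stream and the iterates
    {Ω : Type*} [MeasurableSpace Ω] (P : Measure Ω) [IsProbabilityMeasure P]
    (x : ℕ → Ω → Fin p → ℝ) (ε : ℕ → Ω → ℝ)
    (hmeas : ∀ n, Measurable (fun ω => (x n ω, ε n ω)))
    (hiid : iIndepFun (fun n ω => (x n ω, ε n ω)) P)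
    (hdist : ∀ n, Measure.map (fun ω => (x n ω, ε n ω)) P = νx.prod νε)
    (θ : ℕ → Ω → Fin p → ℝ)
    (hθmeas : ∀ n, Measurable (θ n))
    (hθ0L2 : Integrable (fun ω => ∑ i, (θ 0 ω i - θstar i) ^ 2) P)
    (hθ0indep : IndepFun (θ 0) (fun ω n => (x n ω, ε n ω)) P)
    -- SGD recursion with y_n = x_nᵀθ* + ε_n
    (hrec : ∀ n : ℕ, 1 ≤ n → ∀ ω,
      θ n ω = θ (n - 1) ω
        + γ • ((((x n ω ⬝ᵥ θstar + ε n ω) - x n ω ⬝ᵥ θ (n - 1) ω)) • x n ω)) :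
    ∀ n : ℕ,
      (∫ ω, ∑ i, (θ n ω i - θstar i) ^ 2 ∂P)
        ≤ (1 - γ * (2 - γ * M) * μ) ^ n
              * (∫ ω, ∑ i, (θ 0 ω i - θstar i) ^ 2 ∂P)
          + γ * σ2 * (∫ a, a ⬝ᵥ a ∂νx) / ((2 - γ * M) * μ) := by
  have hγM₂ : γ * M < 2 := (lt_div_iff₀ hM).mp hγM
  set δ : ℕ → Ω → Fin p → ℝ := fun n ω => θ n ω - θstar
  set ρ := 1 - γ * (2 - γ * M) * μ
  set c := γ ^ 2 * σ2 * ∫ a, a ⬝ᵥ a ∂νx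
  have hδ_succ : ∀ n ω, δ (n + 1) ω = sgdErrorStep γ (δ n ω) (x (n + 1) ω, ε (n + 1) ω) := by
    intro n ω
    simp only [δ, sgdErrorStep, hrec (n + 1) n.succ_pos ω, Nat.add_sub_cancel, dotProduct_sub]
    abel_nf
  have hδ_indep := indepFun_of_recursion (continuous_sgdErrorStep γ).measurable
    ((hθmeas 0).sub_const θstar) hmeas (hθ0indep.comp (measurable_sub_const θstar) measurable_id)
    hiid hδ_succ
  have hmse_succ : ∀ n, Integrable (fun ω => δ n ω ⬝ᵥ δ n ω) P →
      Integrable (fun ω => δ (n + 1) ω ⬝ᵥ δ (n + 1) ω) P ∧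
        ∫ ω, δ (n + 1) ω ⬝ᵥ δ (n + 1) ω ∂P ≤ ρ * ∫ ω, δ n ω ⬝ᵥ δ n ω ∂P + c := fun n hn => by
    simpa only [hδ_succ, hvar] using integral_dotProduct_self_sgdErrorStep_comp_le hγ.le hγM₂.le
      hmean hεint hbdd hV hVμ ((hθmeas n).sub_const θstar) (hmeas (n + 1)) (hδ_indep n)
      (hdist (n + 1)) hn
  have hmse_int : ∀ n, Integrable (fun ω => δ n ω ⬝ᵥ δ n ω) P := fun n => by
    induction n with
    | zero => simpa [δ, dotProduct, sq] using hθ0L2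
    | succ n ih => exact (hmse_succ n ih).1
  have hc : 0 ≤ c := by
    have := hvar ▸ integral_nonneg fun e : ℝ => sq_nonneg e
    have := integral_nonneg (μ := νx) (f := fun a => a ⬝ᵥ a) fun a => dotProduct_self_nonneg_s14 a
    positivity
  have hsum : ∀ n ω, ∑ i, (θ n ω i - θstar i) ^ 2 = δ n ω ⬝ᵥ δ n ω := fun n ω => by
    simp [δ, dotProduct, sq]
  intro n
  simp_rw [hsum]
  calc _ ≤ ρ ^ n * ∫ ω, δ 0 ω ⬝ᵥ δ 0 ω ∂P + c / (1 - ρ) :=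
        le_pow_mul_add_div_of_le_mul_add (a := fun n => ∫ ω, δ n ω ⬝ᵥ δ n ω ∂P) (by nlinarith)
          (by nlinarith [mul_pos (mul_pos hγ (sub_pos.mpr hγM₂)) hμ]) hc
          (fun n => (hmse_succ n (hmse_int n)).2) n
    _ = _ := by
        rw [show 1 - ρ = γ * ((2 - γ * M) * μ) by ring,
          show c = γ * (γ * σ2 * ∫ a, a ⬝ᵥ a ∂νx) by ring, mul_div_mul_left _ _ hγ.ne']
end

section
/- In the quadratic-loss implicit SGD model with ‖x‖² ≤ M almost surely and V = E[xxᵀ] ⪰ μI for some μ > 0, for EVERY learning rate γ > 0 and every n ≥ 0, E[‖θ_n − θ*‖²] ≤ (1 − γμ/(1 + γM))ⁿ E[‖θ_0 − θ*‖²] + γ(1 + γM)σ²E[‖x‖²]/μ, where the contraction factor 1 − γμ/(1+γM) always lies in [0, 1); i.e., constant-rate implicit SGD converges exponentially fast to an O(γ) neighborhood of θ* without any upper restriction on γ. -/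
/-! With `D = θ - θstar` and a datum `(x, ε)`, one implicit step maps `D` to
`D + c (ε - x ⬝ᵥ D) x` with the gain `c = γ / (1 + γ ‖x‖²)`. The gain satisfies `c ‖x‖² ≤ 1`
and `γ / (1 + γ M) ≤ c ≤ γ` whatever the size of `γ`, so averaging first over the centred noise
and then over `x` (using `E[x xᵀ] ⪰ μ I`) gives the drift inequality
`E ‖D'‖² ≤ (1 - γ μ / (1 + γ M)) ‖D‖² + γ² σ² E ‖x‖²`. The current iterate is independent of the
next datum, so the drift holds for the mean squared errors, and unrolling this affine recursion
gives the bound. The factor lies in `[0, 1)` because `μ ≤ M`, as seen by testing `V ⪰ μ I` on a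
coordinate vector. -/

open MeasureTheory ProbabilityTheory Matrix

theorem le_pow_mul_add_div_of_le_mul_add_s15 {u : ℕ → ℝ} {ρ b : ℝ} (hρ0 : 0 ≤ ρ) (hρ1 : ρ < 1)
    (hb : 0 ≤ b) (hu : ∀ n, u (n + 1) ≤ ρ * u n + b) (n : ℕ) :
    u n ≤ ρ ^ n * u 0 + b / (1 - ρ) := by
  have h1ρ : 0 < 1 - ρ := by linarith
  induction n with
  | zero => simpa using div_nonneg hb h1ρ.le
  | succ n ih =>
    calc u (n + 1) ≤ ρ * (ρ ^ n * u 0 + b / (1 - ρ)) + b :=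
          (hu n).trans (by gcongr)
      _ = ρ ^ (n + 1) * u 0 + b / (1 - ρ) := by field_simp; ring

namespace ProbabilityTheory

variable {Ω α β τ : Type*} [MeasurableSpace Ω] [MeasurableSpace α] [MeasurableSpace β]
  [MeasurableSpace τ] {P : Measure Ω}

theorem IndepFun.prodMk_left_of_indepFun [IsProbabilityMeasure P] {X : Ω → α} {Y : Ω → β}
    {Z : Ω → τ} (hX : Measurable X) (hY : Measurable Y) (hZ : Measurable Z)
    (hXYZ : IndepFun X (fun ω => (Y ω, Z ω)) P) (hYZ : IndepFun Y Z P) :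
    IndepFun (fun ω => (X ω, Y ω)) Z P := by
  have hXY : IndepFun X Y P := hXYZ.comp measurable_id measurable_fst
  rw [indepFun_iff_map_prod_eq_prod_map_map (hX.prodMk hY).aemeasurable hZ.aemeasurable,
    (indepFun_iff_map_prod_eq_prod_map_map hX.aemeasurable hY.aemeasurable).1 hXY]
  rw [indepFun_iff_map_prod_eq_prod_map_map hX.aemeasurable (hY.prodMk hZ).aemeasurable,
    (indepFun_iff_map_prod_eq_prod_map_map hY.aemeasurable hZ.aemeasurable).1 hYZ] at hXYZ
  calc P.map (fun ω => ((X ω, Y ω), Z ω))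
      = (P.map fun ω => (X ω, (Y ω, Z ω))).map MeasurableEquiv.prodAssoc.symm := by
        rw [Measure.map_map MeasurableEquiv.prodAssoc.symm.measurable
          (hX.prodMk (hY.prodMk hZ))]
        rfl
    _ = ((P.map X).prod (P.map Y)).prod (P.map Z) := by
        rw [hXYZ, ← Measure.prodAssoc_prod, Measure.map_map
          MeasurableEquiv.prodAssoc.symm.measurable MeasurableEquiv.prodAssoc.measurable]
        simp

theorem indepFun_of_recursion [IsProbabilityMeasure P] {X : ℕ → Ω → α} {Z : ℕ → Ω → β}
    {f : α → β → α} (hf : Measurable (Function.uncurry f)) (hX0 : Measurable (X 0))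
    (hZ : ∀ n, Measurable (Z n)) (hX0Z : IndepFun (X 0) (fun ω n => Z n ω) P)
    (hiid : iIndepFun Z P) (hrec : ∀ n ω, X (n + 1) ω = f (X n ω) (Z (n + 1) ω)) (n : ℕ) :
    IndepFun (X n) (Z (n + 1)) P := by
  let past : Ω → α × (Finset.range (n + 1) → β) := fun ω => (X 0 ω, fun i => Z i ω)
  have hpast_indep : IndepFun past (Z (n + 1)) P := by
    have hdisj : Disjoint (Finset.range (n + 1)) {n + 1} := by simp
    have hnext : n + 1 ∈ ({n + 1} : Finset ℕ) := Finset.mem_singleton_self _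
    have h := IndepFun.prodMk_left_of_indepFun (Y := fun ω (i : Finset.range (n + 1)) => Z i ω)
      (Z := fun ω (j : ({n + 1} : Finset ℕ)) => Z j ω) hX0
      (measurable_pi_lambda _ fun i => hZ i) (measurable_pi_lambda _ fun i => hZ i)
      (hX0Z.comp measurable_id ((measurable_pi_lambda _ fun i => measurable_pi_apply _).prodMk
        (measurable_pi_lambda _ fun i => measurable_pi_apply _)))
      (hiid.indepFun_finset _ _ hdisj hZ)
    exact h.comp measurable_id (measurable_pi_apply ⟨n + 1, hnext⟩)
  have hXn : ∀ m ≤ n, Measurable[MeasurableSpace.comap past inferInstance] (X m) := by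
    intro m
    induction m with
    | zero => exact fun _ => measurable_fst.comp (comap_measurable past)
    | succ m ih =>
      intro hm
      have hZm : Measurable[MeasurableSpace.comap past inferInstance] (Z (m + 1)) :=
        (measurable_pi_apply (X := fun _ : Finset.range (n + 1) => β)
          ⟨m + 1, Finset.mem_range.2 (by omega)⟩).comp (measurable_snd.comp (comap_measurable past))
      rw [show X (m + 1) = fun ω => f (X m ω) (Z (m + 1) ω) from funext (hrec m)]
      exact hf.comp ((ih (by omega)).prodMk hZm)
  rw [IndepFun_iff_Indep] at hpast_indep ⊢
  exact indep_of_indep_of_le_left hpast_indep (hXn n le_rfl).comap_le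

theorem IndepFun.integral_comp_le [IsFiniteMeasure P] {X : Ω → α} {Z : Ω → β}
    (hXZ : IndepFun X Z P) (hX : Measurable X) (hZ : Measurable Z) {g : α × β → ℝ}
    (hg : Measurable g) (hgi : Integrable (fun ω => g (X ω, Z ω)) P) {h : α → ℝ}
    (hh : Measurable h) (hhi : Integrable (fun ω => h (X ω)) P) (hle : ∀ a, ∫ z, g (a, z) ∂(P.map Z) ≤ h a) :
    ∫ ω, g (X ω, Z ω) ∂P ≤ ∫ ω, h (X ω) ∂P := by
  have hlaw : P.map (fun ω => (X ω, Z ω)) = (P.map X).prod (P.map Z) :=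
    (indepFun_iff_map_prod_eq_prod_map_map hX.aemeasurable hZ.aemeasurable).1 hXZ
  have hgi' : Integrable g ((P.map X).prod (P.map Z)) := by
    rw [← hlaw]
    exact (integrable_map_measure hg.aestronglyMeasurable (hX.prodMk hZ).aemeasurable).2 hgi
  have hhi' : Integrable h (P.map X) :=
    (integrable_map_measure hh.aestronglyMeasurable hX.aemeasurable).2 hhi
  calc ∫ ω, g (X ω, Z ω) ∂P = ∫ q, g q ∂((P.map X).prod (P.map Z)) := by
        rw [← hlaw, integral_map (hX.prodMk hZ).aemeasurable hg.aestronglyMeasurable]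
    _ = ∫ a, ∫ z, g (a, z) ∂(P.map Z) ∂(P.map X) := integral_prod g hgi'
    _ ≤ ∫ a, h a ∂(P.map X) := integral_mono hgi'.integral_prod_left hhi' hle
    _ = ∫ ω, h (X ω) ∂P := integral_map hX.aemeasurable hh.aestronglyMeasurable

theorem integral_comp_le_of_drift [IsProbabilityMeasure P] {X : ℕ → Ω → α} {Z : ℕ → Ω → β}
    {f : α → β → α} (hf : Measurable (Function.uncurry f)) (hX : ∀ n, Measurable (X n))
    (hZ : ∀ n, Measurable (Z n)) (hX0Z : IndepFun (X 0) (fun ω n => Z n ω) P)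
    (hiid : iIndepFun Z P) (hrec : ∀ n ω, X (n + 1) ω = f (X n ω) (Z (n + 1) ω))
    {ν : Measure β} (hlaw : ∀ n, P.map (Z n) = ν) {L : α → ℝ} (hL : Measurable L)
    (hint : ∀ n, Integrable (fun ω => L (X n ω)) P) {ρ b : ℝ} (hρ0 : 0 ≤ ρ) (hρ1 : ρ < 1)
    (hb : 0 ≤ b) (hdrift : ∀ a, ∫ z, L (f a z) ∂ν ≤ ρ * L a + b) (n : ℕ) :
    ∫ ω, L (X n ω) ∂P ≤ ρ ^ n * ∫ ω, L (X 0 ω) ∂P + b / (1 - ρ) := by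
  refine le_pow_mul_add_div_of_le_mul_add_s15 (u := fun n => ∫ ω, L (X n ω) ∂P) hρ0 hρ1 hb
    (fun n => ?_) n
  have hnext := hint (n + 1)
  simp only [hrec] at hnext ⊢
  calc ∫ ω, L (f (X n ω) (Z (n + 1) ω)) ∂P ≤ ∫ ω, (ρ * L (X n ω) + b) ∂P :=
        (indepFun_of_recursion hf (hX 0) hZ hX0Z hiid hrec n).integral_comp_le (hX n) (hZ (n + 1))
          (g := fun q => L (f q.1 q.2)) (h := fun a => ρ * L a + b) (hL.comp hf) hnext
          (by fun_prop) (((hint n).const_mul ρ).add (integrable_const b))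
          (fun a => hlaw (n + 1) ▸ hdrift a)
    _ = ρ * ∫ ω, L (X n ω) ∂P + b := by
        rw [integral_add ((hint n).const_mul ρ) (integrable_const b), integral_const_mul]
        simp

end ProbabilityTheory

theorem integral_quadratic_of_moments {ν : Measure ℝ} [IsProbabilityMeasure ν] {σ2 : ℝ}
    (hsq : Integrable (fun e => e ^ 2) ν) (hmean : ∫ e, e ∂ν = 0) (hvar : ∫ e, e ^ 2 ∂ν = σ2)
    (A B C : ℝ) : ∫ e, (A + B * e + C * e ^ 2) ∂ν = A + C * σ2 := by
  have hid : Integrable (fun e : ℝ => e) ν :=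
    ((memLp_two_iff_integrable_sq aestronglyMeasurable_id).2 hsq).integrable one_le_two
  have hlin : Integrable (fun e : ℝ => A + B * e) ν := (integrable_const A).add (hid.const_mul B)
  rw [integral_add hlin (hsq.const_mul C), integral_add (integrable_const A) (hid.const_mul B),
    integral_const_mul, integral_const_mul, hmean, hvar]
  simp

section DotProduct

variable {ι : Type*} [Fintype ι]

theorem dotProduct_add_smul_self (D a : ι → ℝ) (t : ℝ) :
    (D + t • a) ⬝ᵥ (D + t • a) = D ⬝ᵥ D + 2 * t * (a ⬝ᵥ D) + t ^ 2 * (a ⬝ᵥ a) := by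
  simp only [add_dotProduct, dotProduct_add, smul_dotProduct, dotProduct_smul, smul_eq_mul,
    dotProduct_comm D a]
  ring

theorem sum_sub_sq_eq_dotProduct (v w : ι → ℝ) :
    ∑ i, (v i - w i) ^ 2 = (v - w) ⬝ᵥ (v - w) := by
  simp only [dotProduct, Pi.sub_apply, sq]

theorem mul_self_le_dotProduct_self (a : ι → ℝ) (i : ι) : a i * a i ≤ a ⬝ᵥ a :=
  Finset.single_le_sum (f := fun k => a k * a k) (fun _ _ => mul_self_nonneg _)
    (Finset.mem_univ i)

theorem abs_mul_le_dotProduct_self (a : ι → ℝ) (i j : ι) : |a i * a j| ≤ a ⬝ᵥ a := by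
  have hi := mul_self_le_dotProduct_self a i
  have hj := mul_self_le_dotProduct_self a j
  rw [abs_mul]
  nlinarith [sq_nonneg (|a i| - |a j|), abs_mul_abs_self (a i), abs_mul_abs_self (a j)]

theorem integral_dotProduct_self_add_noise_smul {ν : Measure ℝ} [IsProbabilityMeasure ν]
    {σ2 : ℝ} (hsq : Integrable (fun e => e ^ 2) ν) (hmean : ∫ e, e ∂ν = 0)
    (hvar : ∫ e, e ^ 2 ∂ν = σ2) (D a : ι → ℝ) (c : ℝ) :
    ∫ e, (D + (c * (e - a ⬝ᵥ D)) • a) ⬝ᵥ (D + (c * (e - a ⬝ᵥ D)) • a) ∂ν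
      = D ⬝ᵥ D - (2 * c - c ^ 2 * (a ⬝ᵥ a)) * (a ⬝ᵥ D) ^ 2 + c ^ 2 * (a ⬝ᵥ a) * σ2 := by
  have hquad : ∀ e, (D + (c * (e - a ⬝ᵥ D)) • a) ⬝ᵥ (D + (c * (e - a ⬝ᵥ D)) • a)
      = (D ⬝ᵥ D - (2 * c - c ^ 2 * (a ⬝ᵥ a)) * (a ⬝ᵥ D) ^ 2)
        + (2 * c * (a ⬝ᵥ D) - 2 * c ^ 2 * (a ⬝ᵥ a) * (a ⬝ᵥ D)) * e
        + c ^ 2 * (a ⬝ᵥ a) * e ^ 2 := fun e => by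
    rw [dotProduct_add_smul_self]
    ring
  simp_rw [hquad]
  exact integral_quadratic_of_moments hsq hmean hvar _ _ _

noncomputable def secondMoment (ν : Measure (ι → ℝ)) : Matrix ι ι ℝ :=
  Matrix.of fun i j => ∫ a, a i * a j ∂ν

theorem integrable_mul_apply_of_ae_dotProduct_self_le {ν : Measure (ι → ℝ)} [IsFiniteMeasure ν]
    {M : ℝ} (hbdd : ∀ᵐ a ∂ν, a ⬝ᵥ a ≤ M) (i j : ι) :
    Integrable (fun a : ι → ℝ => a i * a j) ν :=
  Integrable.of_bound (by fun_prop) M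
    (hbdd.mono fun a ha => (abs_mul_le_dotProduct_self a i j).trans ha)

theorem sq_dotProduct_eq_sum (a D : ι → ℝ) :
    (a ⬝ᵥ D) ^ 2 = ∑ i, ∑ j, D i * D j * (a i * a j) := by
  simp only [dotProduct, sq, Finset.sum_mul_sum]
  exact Finset.sum_congr rfl fun i _ => Finset.sum_congr rfl fun j _ => by ring

theorem integrable_sq_dotProduct {ν : Measure (ι → ℝ)}
    (hint : ∀ i j, Integrable (fun a : ι → ℝ => a i * a j) ν) (D : ι → ℝ) :
    Integrable (fun a : ι → ℝ => (a ⬝ᵥ D) ^ 2) ν := by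
  simp_rw [sq_dotProduct_eq_sum]
  exact integrable_finsetSum _ fun i _ =>
    integrable_finsetSum _ fun j _ => (hint i j).const_mul _

theorem integral_sq_dotProduct {ν : Measure (ι → ℝ)}
    (hint : ∀ i j, Integrable (fun a : ι → ℝ => a i * a j) ν) (D : ι → ℝ) :
    ∫ a, (a ⬝ᵥ D) ^ 2 ∂ν = D ⬝ᵥ (secondMoment ν *ᵥ D) := by
  simp_rw [sq_dotProduct_eq_sum]
  rw [integral_finsetSum _ fun i _ =>
    integrable_finsetSum _ fun j _ => (hint i j).const_mul _]
  simp_rw [integral_finsetSum _ fun j _ => (hint _ j).const_mul _, integral_const_mul]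
  simp only [dotProduct, mulVec, secondMoment, of_apply, Finset.mul_sum]
  exact Finset.sum_congr rfl fun i _ => Finset.sum_congr rfl fun j _ => by ring

theorem le_of_ae_dotProduct_self_le_of_le_secondMoment [Nonempty ι] {ν : Measure (ι → ℝ)}
    [IsProbabilityMeasure ν] {M μ : ℝ} (hbdd : ∀ᵐ a ∂ν, a ⬝ᵥ a ≤ M)
    (hVμ : ∀ v, μ * (v ⬝ᵥ v) ≤ v ⬝ᵥ (secondMoment ν *ᵥ v)) : μ ≤ M := by
  classical
  obtain ⟨i⟩ := ‹Nonempty ι›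
  have hint := integrable_mul_apply_of_ae_dotProduct_self_le hbdd i i
  calc μ = μ * (Pi.single i 1 ⬝ᵥ Pi.single i 1) := by simp
    _ ≤ ∫ a, a i * a i ∂ν := by simpa [secondMoment] using hVμ (Pi.single i 1)
    _ ≤ ∫ _, M ∂ν :=
        integral_mono_ae hint (integrable_const M)
          (hbdd.mono fun a ha => (mul_self_le_dotProduct_self a i).trans ha)
    _ = M := by simp

end DotProduct

section ISGD

variable {ι : Type*} [Fintype ι]

/-- The closed form of the implicit update `θ' = θ + γ (y - x ⬝ᵥ θ') x` on the datum
`z = (x, ε)` with response `y = x ⬝ᵥ θstar + ε`. -/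
noncomputable def isgdStep (γ : ℝ) (θstar θ : ι → ℝ) (z : (ι → ℝ) × ℝ) : ι → ℝ :=
  θ + (γ / (1 + γ * (z.1 ⬝ᵥ z.1))) • (((z.1 ⬝ᵥ θstar + z.2) - z.1 ⬝ᵥ θ) • z.1)

theorem measurable_isgdStep (γ : ℝ) (θstar : ι → ℝ) :
    Measurable (Function.uncurry (isgdStep γ θstar)) := by
  unfold isgdStep Function.uncurry
  fun_prop

theorem isgdStep_sub (γ : ℝ) (θstar θ a : ι → ℝ) (e : ℝ) :
    isgdStep γ θstar θ (a, e) - θstar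
      = (θ - θstar) + (γ / (1 + γ * (a ⬝ᵥ a)) * (e - a ⬝ᵥ (θ - θstar))) • a := by
  ext i
  simp only [isgdStep, Pi.add_apply, Pi.sub_apply, Pi.smul_apply, smul_eq_mul, dotProduct_sub]
  ring

theorem isgd_rate_pos_le_one {γ μ M : ℝ} (hγ : 0 < γ) (hμ : 0 < μ) (hμM : μ ≤ M) :
    0 < γ * μ / (1 + γ * M) ∧ γ * μ / (1 + γ * M) ≤ 1 := by
  have hd : 0 < 1 + γ * M := by nlinarith
  exact ⟨by positivity, (div_le_one hd).2 (by nlinarith)⟩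

theorem isgd_gain_bounds {γ K : ℝ} (hγ : 0 ≤ γ) (hK : 0 ≤ K) :
    0 ≤ γ / (1 + γ * K) ∧ γ / (1 + γ * K) ≤ γ ∧ γ / (1 + γ * K) * K ≤ 1 := by
  have hd : 0 < 1 + γ * K := by positivity
  refine ⟨by positivity, div_le_self hγ (by nlinarith), ?_⟩
  rw [div_mul_eq_mul_div, div_le_one hd]
  linarith

theorem isgdStep_sqErr_le {γ : ℝ} (hγ : 0 ≤ γ) (θstar θ : ι → ℝ) (z : (ι → ℝ) × ℝ) :
    (isgdStep γ θstar θ z - θstar) ⬝ᵥ (isgdStep γ θstar θ z - θstar)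
      ≤ 2 * ((θ - θstar) ⬝ᵥ (θ - θstar)) + 2 * γ * z.2 ^ 2 := by
  obtain ⟨a, e⟩ := z
  have hK : 0 ≤ a ⬝ᵥ a := Finset.sum_nonneg fun i _ => mul_self_nonneg (a i)
  obtain ⟨hc0, hcγ, hcK⟩ := isgd_gain_bounds hγ hK
  rw [isgdStep_sub, dotProduct_add_smul_self]
  set D := θ - θstar
  set s := a ⬝ᵥ D
  set K := a ⬝ᵥ a
  set c := γ / (1 + γ * K)
  -- The new error is `u + v` with `u = D - c s a`, `v = c e a`, and
  -- `‖u + v‖² = 2 ‖u‖² + 2 ‖v‖² - ‖u - v‖²`, where `‖u‖² ≤ ‖D‖²` as `c K ≤ 2` and `‖v‖² ≤ γ e²`.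
  have hw : 0 ≤ D ⬝ᵥ D + 2 * -(c * (s + e)) * s + (-(c * (s + e))) ^ 2 * K := by
    rw [← dotProduct_add_smul_self]
    exact Finset.sum_nonneg fun i _ => mul_self_nonneg _
  have hu : 0 ≤ c * s ^ 2 * (2 - c * K) := by
    have : 0 ≤ 2 - c * K := by linarith
    positivity
  have hv : c ^ 2 * K * e ^ 2 ≤ γ * e ^ 2 := by
    gcongr
    nlinarith
  dsimp only
  nlinarith

theorem integral_sqErr_isgdStep_noise_le {νε : Measure ℝ} [IsProbabilityMeasure νε]
    {γ σ2 M : ℝ} (hγ : 0 ≤ γ) (hsq : Integrable (fun e => e ^ 2) νε) (hmean : ∫ e, e ∂νε = 0)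
    (hvar : ∫ e, e ^ 2 ∂νε = σ2) (θstar θ a : ι → ℝ) (hKM : a ⬝ᵥ a ≤ M) :
    ∫ e, (isgdStep γ θstar θ (a, e) - θstar) ⬝ᵥ (isgdStep γ θstar θ (a, e) - θstar) ∂νε
      ≤ (θ - θstar) ⬝ᵥ (θ - θstar) - γ / (1 + γ * M) * (a ⬝ᵥ (θ - θstar)) ^ 2
        + γ ^ 2 * σ2 * (a ⬝ᵥ a) := by
  simp_rw [isgdStep_sub]
  rw [integral_dotProduct_self_add_noise_smul hsq hmean hvar]
  have hK : 0 ≤ a ⬝ᵥ a := Finset.sum_nonneg fun i _ => mul_self_nonneg (a i)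
  have hσ2 : 0 ≤ σ2 := hvar ▸ integral_nonneg fun e => sq_nonneg e
  obtain ⟨hc0, hcγ, hcK⟩ := isgd_gain_bounds hγ hK
  have hκc : γ / (1 + γ * M) ≤ γ / (1 + γ * (a ⬝ᵥ a)) :=
    div_le_div_of_nonneg_left hγ (by positivity) (by nlinarith)
  set c := γ / (1 + γ * (a ⬝ᵥ a))
  have hgain : γ / (1 + γ * M) * (a ⬝ᵥ (θ - θstar)) ^ 2
      ≤ (2 * c - c ^ 2 * (a ⬝ᵥ a)) * (a ⬝ᵥ (θ - θstar)) ^ 2 := by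
    gcongr
    nlinarith
  have hnoise : c ^ 2 * (a ⬝ᵥ a) * σ2 ≤ γ ^ 2 * σ2 * (a ⬝ᵥ a) := by
    have : c ^ 2 ≤ γ ^ 2 := pow_le_pow_left₀ hc0 hcγ 2
    nlinarith [mul_nonneg hK hσ2]
  linarith

theorem integrable_sqErr_isgdStep {νx : Measure (ι → ℝ)} {νε : Measure ℝ} [IsFiniteMeasure νx]
    [IsFiniteMeasure νε] {γ : ℝ} (hγ : 0 ≤ γ) (hsq : Integrable (fun e => e ^ 2) νε)
    (θstar θ : ι → ℝ) :
    Integrable (fun z => (isgdStep γ θstar θ z - θstar) ⬝ᵥ (isgdStep γ θstar θ z - θstar))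
      (νx.prod νε) := by
  refine ((integrable_const (2 * ((θ - θstar) ⬝ᵥ (θ - θstar)))).add
    ((hsq.comp_snd νx).const_mul (2 * γ))).mono'
    (by have := (measurable_isgdStep γ θstar).comp (measurable_prodMk_left (x := θ)); fun_prop)
    (ae_of_all _ fun z => ?_)
  rw [Real.norm_eq_abs, abs_of_nonneg (Finset.sum_nonneg fun i _ => mul_self_nonneg _)]
  exact isgdStep_sqErr_le hγ θstar θ z

theorem isgd_integral_sqErr_step_le {νx : Measure (ι → ℝ)} {νε : Measure ℝ}
    [IsProbabilityMeasure νx] [IsProbabilityMeasure νε] {γ σ2 M μ : ℝ} (hγ : 0 ≤ γ)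
    (hsq : Integrable (fun e => e ^ 2) νε) (hmean : ∫ e, e ∂νε = 0) (hvar : ∫ e, e ^ 2 ∂νε = σ2)
    (hbdd : ∀ᵐ a ∂νx, a ⬝ᵥ a ≤ M) (hVμ : ∀ v, μ * (v ⬝ᵥ v) ≤ v ⬝ᵥ (secondMoment νx *ᵥ v))
    (θstar θ : ι → ℝ) :
    ∫ z, (isgdStep γ θstar θ z - θstar) ⬝ᵥ (isgdStep γ θstar θ z - θstar) ∂(νx.prod νε)
      ≤ (1 - γ * μ / (1 + γ * M)) * ((θ - θstar) ⬝ᵥ (θ - θstar))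
        + γ ^ 2 * σ2 * ∫ a, a ⬝ᵥ a ∂νx := by
  set D := θ - θstar
  have hM : 0 ≤ M := by
    obtain ⟨a, ha⟩ := hbdd.exists
    exact (Finset.sum_nonneg fun i _ => mul_self_nonneg (a i)).trans ha
  set κ := γ / (1 + γ * M)
  have hκ : 0 ≤ κ := by positivity
  have hint := integrable_mul_apply_of_ae_dotProduct_self_le hbdd
  have hsq_int : Integrable (fun a => D ⬝ᵥ D - κ * (a ⬝ᵥ D) ^ 2) νx :=
    (integrable_const _).sub ((integrable_sq_dotProduct hint D).const_mul κ)
  have hK_int : Integrable (fun a : ι → ℝ => γ ^ 2 * σ2 * (a ⬝ᵥ a)) νx :=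
    (integrable_finsetSum _ fun i _ => hint i i).const_mul _
  have hstep_int := integrable_sqErr_isgdStep (νx := νx) hγ hsq θstar θ
  calc ∫ z, (isgdStep γ θstar θ z - θstar) ⬝ᵥ (isgdStep γ θstar θ z - θstar) ∂(νx.prod νε)
      = ∫ a, ∫ e, (isgdStep γ θstar θ (a, e) - θstar) ⬝ᵥ (isgdStep γ θstar θ (a, e) - θstar)
          ∂νε ∂νx := integral_prod _ hstep_int
    _ ≤ ∫ a, (D ⬝ᵥ D - κ * (a ⬝ᵥ D) ^ 2 + γ ^ 2 * σ2 * (a ⬝ᵥ a)) ∂νx :=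
        integral_mono_ae hstep_int.integral_prod_left (hsq_int.add hK_int)
          (hbdd.mono fun a => integral_sqErr_isgdStep_noise_le hγ hsq hmean hvar θstar θ a)
    _ = D ⬝ᵥ D - κ * (D ⬝ᵥ (secondMoment νx *ᵥ D)) + γ ^ 2 * σ2 * ∫ a, a ⬝ᵥ a ∂νx := by
        rw [integral_add hsq_int hK_int, integral_sub (integrable_const _)
          ((integrable_sq_dotProduct hint D).const_mul κ), integral_const_mul,
          integral_const_mul, integral_sq_dotProduct hint]
        simp
    _ ≤ _ := by
        rw [show γ * μ / (1 + γ * M) = κ * μ by ring]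
        linarith [mul_le_mul_of_nonneg_left (hVμ D) hκ]

theorem integrable_sqErr_isgd {Ω : Type*} [MeasurableSpace Ω] {P : Measure Ω} {γ : ℝ}
    (hγ : 0 ≤ γ) {θstar : ι → ℝ} {θ : ℕ → Ω → ι → ℝ} {Z : ℕ → Ω → (ι → ℝ) × ℝ}
    (hθmeas : ∀ n, Measurable (θ n)) (hnoise : ∀ n, Integrable (fun ω => (Z n ω).2 ^ 2) P)
    (h0 : Integrable (fun ω => (θ 0 ω - θstar) ⬝ᵥ (θ 0 ω - θstar)) P)
    (hrec : ∀ n ω, θ (n + 1) ω = isgdStep γ θstar (θ n ω) (Z (n + 1) ω)) (n : ℕ) :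
    Integrable (fun ω => (θ n ω - θstar) ⬝ᵥ (θ n ω - θstar)) P := by
  induction n with
  | zero => exact h0
  | succ n ih =>
    refine ((ih.const_mul 2).add ((hnoise (n + 1)).const_mul (2 * γ))).mono'
      (by have := hθmeas (n + 1); fun_prop) (ae_of_all _ fun ω => ?_)
    rw [Real.norm_eq_abs, abs_of_nonneg (Finset.sum_nonneg fun i _ => mul_self_nonneg _),
      hrec n ω]
    exact isgdStep_sqErr_le hγ θstar _ _

end ISGD

theorem isgd_quadratic_constant_rate_mse_bound_general
    (p : ℕ) (hp : 0 < p)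
    (νx : Measure (Fin p → ℝ)) (νε : Measure ℝ)
    [IsProbabilityMeasure νx] [IsProbabilityMeasure νε]
    (θstar : Fin p → ℝ) (γ σ2 M μ : ℝ)
    (hμ : 0 < μ) (hγ : 0 < γ)
    (hmean : ∫ e, e ∂νε = 0) (hvar : ∫ e, e ^ 2 ∂νε = σ2)
    (hεint : Integrable (fun e : ℝ => e ^ 2) νε)
    (hbdd : ∀ᵐ a ∂νx, a ⬝ᵥ a ≤ M)
    (V : Matrix (Fin p) (Fin p) ℝ)
    (hV : ∀ i j, V i j = ∫ a, a i * a j ∂νx)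
    (hVμ : ∀ v : Fin p → ℝ, μ * (v ⬝ᵥ v) ≤ v ⬝ᵥ (V *ᵥ v))
    -- the probability space carrying the i.i.d. data stream and the iterates
    {Ω : Type*} [MeasurableSpace Ω] (P : Measure Ω) [IsProbabilityMeasure P]
    (x : ℕ → Ω → Fin p → ℝ) (ε : ℕ → Ω → ℝ)
    (hmeas : ∀ n, Measurable (fun ω => (x n ω, ε n ω)))
    (hiid : iIndepFun (fun n ω => (x n ω, ε n ω)) P)
    (hdist : ∀ n, Measure.map (fun ω => (x n ω, ε n ω)) P = νx.prod νε)
    (θ : ℕ → Ω → Fin p → ℝ)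
    (hθmeas : ∀ n, Measurable (θ n))
    (hθ0L2 : Integrable (fun ω => ∑ i, (θ 0 ω i - θstar i) ^ 2) P)
    (hθ0indep : IndepFun (θ 0) (fun ω n => (x n ω, ε n ω)) P)
    -- implicit SGD recursion (closed form) with y_n = x_nᵀθ* + ε_n
    (hrec : ∀ n : ℕ, 1 ≤ n → ∀ ω,
      θ n ω = θ (n - 1) ω
        + (γ / (1 + γ * (x n ω ⬝ᵥ x n ω)))
            • ((((x n ω ⬝ᵥ θstar + ε n ω) - x n ω ⬝ᵥ θ (n - 1) ω)) • x n ω)) :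
    (0 ≤ 1 - γ * μ / (1 + γ * M) ∧ 1 - γ * μ / (1 + γ * M) < 1) ∧
    ∀ n : ℕ,
      (∫ ω, ∑ i, (θ n ω i - θstar i) ^ 2 ∂P)
        ≤ (1 - γ * μ / (1 + γ * M)) ^ n
              * (∫ ω, ∑ i, (θ 0 ω i - θstar i) ^ 2 ∂P)
          + γ * (1 + γ * M) * σ2 * (∫ a, a ⬝ᵥ a ∂νx) / μ := by
  have hVx : V = secondMoment νx := Matrix.ext hV
  subst hVx
  have : Nonempty (Fin p) := ⟨⟨0, hp⟩⟩
  have hμM := le_of_ae_dotProduct_self_le_of_le_secondMoment hbdd hVμ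
  have hM : 0 < M := hμ.trans_le hμM
  obtain ⟨hrate_pos, hrate_le⟩ := isgd_rate_pos_le_one hγ hμ hμM
  have hσ2 : 0 ≤ σ2 := hvar ▸ integral_nonneg fun e => sq_nonneg e
  have hK : 0 ≤ ∫ a, a ⬝ᵥ a ∂νx :=
    integral_nonneg fun a => Finset.sum_nonneg fun i _ => mul_self_nonneg (a i)
  refine ⟨⟨by linarith, by linarith⟩, fun n => ?_⟩
  set Z : ℕ → Ω → (Fin p → ℝ) × ℝ := fun n ω => (x n ω, ε n ω)
  have hstep : ∀ n ω, θ (n + 1) ω = isgdStep γ θstar (θ n ω) (Z (n + 1) ω) :=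
    fun n ω => hrec (n + 1) (by omega) ω
  have hnoise : ∀ n, Integrable (fun ω => (Z n ω).2 ^ 2) P := fun n =>
    (integrable_map_measure (g := fun z : (Fin p → ℝ) × ℝ => z.2 ^ 2) (by fun_prop)
      (hmeas n).aemeasurable).1 (hdist n ▸ hεint.comp_snd νx)
  simp only [sum_sub_sq_eq_dotProduct] at hθ0L2 ⊢
  refine (integral_comp_le_of_drift (measurable_isgdStep γ θstar) hθmeas hmeas hθ0indep hiid
    hstep hdist (L := fun δ => (δ - θstar) ⬝ᵥ (δ - θstar)) (by fun_prop)
    (integrable_sqErr_isgd hγ.le hθmeas hnoise hθ0L2 hstep)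
    (by linarith) (by linarith) (by positivity)
    (isgd_integral_sqErr_step_le hγ.le hεint hmean hvar hbdd hVμ θstar) n).trans_eq ?_
  congr 1
  field_simp
  ring

/-- Quadratic-loss implicit SGD
`θ_n = θ_{n-1} + (γ/(1+γ‖x_n‖²))(y_n - x_nᵀθ_{n-1})x_n` with i.i.d. data
`y_n = x_nᵀθ* + ε_n`, `x ~ νx`, `ε ~ νε` independent of `x`, `E[ε] = 0`,
`E[ε²] = σ²`, `‖x‖² ≤ M` almost surely and `V = E[xxᵀ] ⪰ μI` with `μ > 0`.
Then for EVERY learning rate `γ > 0` and every `n ≥ 0`,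
`E[‖θ_n - θ*‖²] ≤ (1 - γμ/(1+γM))ⁿ E[‖θ₀ - θ*‖²] + γ(1+γM)σ²E[‖x‖²]/μ`,
where the contraction factor `1 - γμ/(1+γM)` always lies in `[0, 1)`. -/
theorem isgd_quadratic_constant_rate_mse_bound
    (p : ℕ) (hp : 0 < p)
    (νx : Measure (Fin p → ℝ)) (νε : Measure ℝ)
    [IsProbabilityMeasure νx] [IsProbabilityMeasure νε]
    (θstar : Fin p → ℝ) (γ σ2 M μ : ℝ)
    (hμ : 0 < μ) (hM : 0 < M) (hγ : 0 < γ)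
    (hmean : ∫ e, e ∂νε = 0) (hvar : ∫ e, e ^ 2 ∂νε = σ2)
    (hεint : Integrable (fun e : ℝ => e ^ 2) νε)
    (hbdd : ∀ᵐ a ∂νx, a ⬝ᵥ a ≤ M)
    (V : Matrix (Fin p) (Fin p) ℝ)
    (hV : ∀ i j, V i j = ∫ a, a i * a j ∂νx)
    (hVμ : ∀ v : Fin p → ℝ, μ * (v ⬝ᵥ v) ≤ v ⬝ᵥ (V *ᵥ v))
    -- the probability space carrying the i.i.d. data stream and the iterates
    {Ω : Type*} [MeasurableSpace Ω] (P : Measure Ω) [IsProbabilityMeasure P]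
    (x : ℕ → Ω → Fin p → ℝ) (ε : ℕ → Ω → ℝ)
    (hmeas : ∀ n, Measurable (fun ω => (x n ω, ε n ω)))
    (hiid : iIndepFun (fun n ω => (x n ω, ε n ω)) P)
    (hdist : ∀ n, Measure.map (fun ω => (x n ω, ε n ω)) P = νx.prod νε)
    (θ : ℕ → Ω → Fin p → ℝ)
    (hθmeas : ∀ n, Measurable (θ n))
    (hθ0L2 : Integrable (fun ω => ∑ i, (θ 0 ω i - θstar i) ^ 2) P)
    (hθ0indep : IndepFun (θ 0) (fun ω n => (x n ω, ε n ω)) P)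
    -- implicit SGD recursion (closed form) with y_n = x_nᵀθ* + ε_n
    (hrec : ∀ n : ℕ, 1 ≤ n → ∀ ω,
      θ n ω = θ (n - 1) ω
        + (γ / (1 + γ * (x n ω ⬝ᵥ x n ω)))
            • ((((x n ω ⬝ᵥ θstar + ε n ω) - x n ω ⬝ᵥ θ (n - 1) ω)) • x n ω)) :
    (0 ≤ 1 - γ * μ / (1 + γ * M) ∧ 1 - γ * μ / (1 + γ * M) < 1) ∧
    ∀ n : ℕ,
      (∫ ω, ∑ i, (θ n ω i - θstar i) ^ 2 ∂P)
        ≤ (1 - γ * μ / (1 + γ * M)) ^ n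
              * (∫ ω, ∑ i, (θ 0 ω i - θstar i) ^ 2 ∂P)
          + γ * (1 + γ * M) * σ2 * (∫ a, a ⬝ᵥ a ∂νx) / μ :=
  isgd_quadratic_constant_rate_mse_bound_general p hp νx νε θstar γ σ2 M μ hμ hγ hmean hvar hεint
    hbdd V hV hVμ P x ε hmeas hiid hdist θ hθmeas hθ0L2 hθ0indep hrec
end
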